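/- arXiv:1204.5828 — 8 statements merged into one kernel-verified Lean document; each statement's English description precedes it below -/
import Mathlib

section
/- Let γ : [0,1] → ℝ² be a curve of finite length L. Then there exist side lengths w ≥ h ≥ 0 and a rectangle Q with side lengths w and h such that the image of γ is contained in Q and w + 2h ≤ √2 · L (equivalently, per(Q) − long(Q) ≤ √2 · L, i.e., the sum of the lengths of the three shortest sides of Q is at most √2 · L). -/
/-! Rotate the plane so that the chord from `γ 0` to `γ 1` is horizontal and enclose the rotated
curve in its axis-parallel bounding box, of width `W` and height `H`. The curve meets both
vertical sides, and since it starts and ends at the same height it must also climb to the top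
and descend to the bottom, so its `ℓ¹`-length is at least `W + 2H`. The `ℓ¹`-length is at most
`√2` times the Euclidean length, and putting the longer side of the box first only decreases
`W + 2H`. -/

open Set
open scoped ENNReal

namespace eVariationOn

variable {α : Type*} [LinearOrder α] {s : Set α}

section EMetric

variable {E F G : Type*} [PseudoEMetricSpace E] [PseudoEMetricSpace F] [PseudoEMetricSpace G]
  {f : α → E} {g : α → F} {h : α → G} {C : ℝ≥0∞}

theorem insert_of_isGreatest (f : α → E) {t : Set α} {m a : α} (hm : IsGreatest t m)
    (hma : m ≤ a) : eVariationOn f (insert a t) = eVariationOn f t + edist (f m) (f a) := by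
  have hsplit : insert a t = t ∪ {m, a} := by
    ext x; simp only [mem_insert_iff, mem_union]; grind [hm.1]
  rw [hsplit, union f hm ⟨by simp, by simp [hma]⟩, pair]

theorem add_le_mul_finset
    (hfgh : ∀ a ∈ s, ∀ b ∈ s, edist (f a) (f b) + edist (g a) (g b) ≤ C * edist (h a) (h b))
    (t : Finset α) (hts : ↑t ⊆ s) :
    eVariationOn f t + eVariationOn g t ≤ C * eVariationOn h t := by
  classical
  induction t using Finset.induction_on_max with
  | empty => simp
  | insert a t hlt ih =>
    rcases t.eq_empty_or_nonempty with rfl | hne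
    · simp
    have hm : IsGreatest (t : Set α) (t.max' hne) := t.isGreatest_max' hne
    have hma := (hlt _ hm.1).le
    have hts' : (t : Set α) ⊆ s := (Finset.coe_subset.mpr (Finset.subset_insert a t)).trans hts
    rw [Finset.coe_insert, insert_of_isGreatest f hm hma, insert_of_isGreatest g hm hma,
      insert_of_isGreatest h hm hma, mul_add, add_add_add_comm]
    exact add_le_add (ih hts') (hfgh _ (hts' hm.1) a (hts (by simp)))

/-- Two partitions are compared through their common refinement, on which both sums grow. -/
theorem add_le_mul
    (hfgh : ∀ a ∈ s, ∀ b ∈ s, edist (f a) (f b) + edist (g a) (g b) ≤ C * edist (h a) (h b)) :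
    eVariationOn f s + eVariationOn g s ≤ C * eVariationOn h s := by
  classical
  rcases s.eq_empty_or_nonempty with rfl | hs
  · simp
  have := nonempty_monotone_mem hs
  refine ENNReal.iSup_add_iSup_le fun ⟨n, u, hu, us⟩ ⟨k, v, hv, vs⟩ => ?_
  set t := (Finset.range (n + 1)).image u ∪ (Finset.range (k + 1)).image v
  have hts : ↑t ⊆ s := by
    intro x; simp only [t, Finset.coe_union, Finset.coe_image]; grind
  have hut : u '' Iic n ⊆ t := by
    intro x; simp only [t, Finset.coe_union, Finset.coe_image]; grind
  have hvt : v '' Iic k ⊆ t := by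
    intro x; simp only [t, Finset.coe_union, Finset.coe_image]; grind
  calc ∑ i ∈ Finset.range n, edist (f (u (i + 1))) (f (u i))
        + ∑ i ∈ Finset.range k, edist (g (v (i + 1))) (g (v i))
      = eVariationOn f (u '' Iic n) + eVariationOn g (v '' Iic k) := by
        simp only [image_range_of_monotone _ hu, image_range_of_monotone _ hv, edist_comm]
    _ ≤ eVariationOn f t + eVariationOn g t := add_le_add (mono f hut) (mono g hvt)
    _ ≤ C * eVariationOn h t := add_le_mul_finset hfgh t hts
    _ ≤ C * eVariationOn h s := by gcongr; exact mono h hts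

theorem edist_add_edist_add_edist_le (f : α → E) {a b c d : α} (ha : a ∈ s) (hb : b ∈ s)
    (hc : c ∈ s) (hd : d ∈ s) (hab : a ≤ b) (hbc : b ≤ c) (hcd : c ≤ d) :
    edist (f a) (f b) + edist (f b) (f c) + edist (f c) (f d) ≤ eVariationOn f s :=
  calc edist (f a) (f b) + edist (f b) (f c) + edist (f c) (f d)
      ≤ eVariationOn f (s ∩ Icc a b) + eVariationOn f (s ∩ Icc b c)
          + eVariationOn f (s ∩ Icc c d) := by
        gcongr <;> apply edist_le <;> simp [*]
    _ = eVariationOn f (s ∩ Icc a d) := by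
        rw [Icc_add_Icc f hab hbc hb, Icc_add_Icc f (hab.trans hbc) hcd hc]
    _ ≤ eVariationOn f s := mono f inter_subset_left

theorem two_mul_edist_le_of_eq {a b u v : α} (ha : a ∈ s) (hb : b ∈ s) (hu : u ∈ s)
    (hv : v ∈ s) (hau : a ≤ u) (hub : u ≤ b) (hav : a ≤ v) (hvb : v ≤ b) (hfab : f a = f b) :
    2 * edist (f u) (f v) ≤ eVariationOn f s := by
  wlog huv : u ≤ v generalizing u v
  · rw [edist_comm]; exact this hv hu hav hvb hau hub (le_of_not_ge huv)
  calc 2 * edist (f u) (f v) = edist (f u) (f v) + edist (f u) (f v) := two_mul _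
    _ ≤ edist (f a) (f u) + edist (f u) (f v) + edist (f v) (f b) := by
        rw [add_right_comm]
        gcongr
        calc edist (f u) (f v) ≤ edist (f u) (f a) + edist (f a) (f v) := edist_triangle _ _ _
          _ = _ := by rw [hfab, edist_comm (f u), edist_comm (f b) (f v)]
    _ ≤ eVariationOn f s := edist_add_edist_add_edist_le f ha hu hv hb hau huv hvb

end EMetric

theorem dist_add_two_mul_dist_le {E F G : Type*} [PseudoMetricSpace E] [PseudoMetricSpace F]
    [PseudoMetricSpace G] {f : α → E} {g : α → F} {h : α → G} {C : ℝ} (hC : 0 ≤ C)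
    (hfgh : ∀ a ∈ s, ∀ b ∈ s, dist (f a) (f b) + dist (g a) (g b) ≤ C * dist (h a) (h b))
    (hh : eVariationOn h s ≠ ⊤)
    {a b p q u v : α} (ha : a ∈ s) (hb : b ∈ s) (hp : p ∈ s) (hq : q ∈ s) (hu : u ∈ s)
    (hv : v ∈ s) (hau : a ≤ u) (hub : u ≤ b) (hav : a ≤ v) (hvb : v ≤ b) (hgab : g a = g b) :
    dist (f p) (f q) + 2 * dist (g u) (g v) ≤ C * (eVariationOn h s).toReal := by
  have hfgh' : ∀ a ∈ s, ∀ b ∈ s,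
      edist (f a) (f b) + edist (g a) (g b) ≤ ENNReal.ofReal C * edist (h a) (h b) := by
    intro a ha b hb
    simp only [edist_dist, ← ENNReal.ofReal_add dist_nonneg dist_nonneg,
      ← ENNReal.ofReal_mul hC]
    exact ENNReal.ofReal_le_ofReal (hfgh a ha b hb)
  have key : edist (f p) (f q) + 2 * edist (g u) (g v) ≤ ENNReal.ofReal C * eVariationOn h s :=
    (add_le_add (edist_le f hp hq) (two_mul_edist_le_of_eq ha hb hu hv hau hub hav hvb hgab)).trans
      (add_le_mul hfgh')
  have := ENNReal.toReal_mono (by finiteness) key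
  rwa [ENNReal.toReal_add (by finiteness) (by finiteness), ENNReal.toReal_mul, ENNReal.toReal_mul,
    ENNReal.toReal_ofReal hC, ← dist_edist, ← dist_edist, ENNReal.toReal_ofNat] at this

end eVariationOn

namespace EuclideanSpace

theorem exists_linearIsometryEquiv_apply_eq_single {ι : Type*} [Fintype ι] [DecidableEq ι]
    (v : EuclideanSpace ℝ ι) (i : ι) :
    ∃ R : EuclideanSpace ℝ ι ≃ₗᵢ[ℝ] EuclideanSpace ℝ ι, R v = single i ‖v‖ :=
  ⟨_, Submodule.reflection_sub (by simp)⟩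

theorem dist_apply_add_dist_apply_le (z z' : EuclideanSpace ℝ (Fin 2)) :
    dist (z 0) (z' 0) + dist (z 1) (z' 1) ≤ √2 * dist z z' := by
  rw [EuclideanSpace.dist_eq, Fin.sum_univ_two, ← Real.sqrt_mul zero_le_two]
  apply Real.le_sqrt_of_sq_le
  nlinarith [sq_nonneg (dist (z 0) (z' 0) - dist (z 1) (z' 1))]

end EuclideanSpace

theorem exists_isometry_subset_image_box {P : Type*} [PseudoMetricSpace P]
    (e : P ≃ᵢ EuclideanSpace ℝ (Fin 2)) {K : Set P} {a a' b b' : ℝ}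
    (hK : ∀ z ∈ K, e z 0 ∈ Icc a a' ∧ e z 1 ∈ Icc b b') :
    ∃ f : EuclideanSpace ℝ (Fin 2) → P, Isometry f ∧
      K ⊆ f '' {p | p 0 ∈ Icc 0 (a' - a) ∧ p 1 ∈ Icc 0 (b' - b)} := by
  refine ⟨fun p => e.symm (p + !₂[a, b]), e.symm.isometry.comp (isometry_add_right _), ?_⟩
  intro z hz
  refine ⟨e z - !₂[a, b], ?_, by simp⟩
  simpa using hK z hz

theorem exists_rectangle_of_bounds {P : Type*} [PseudoMetricSpace P]
    (e : P ≃ᵢ EuclideanSpace ℝ (Fin 2)) {K : Set P} {a a' b b' : ℝ} (ha : a ≤ a') (hb : b ≤ b')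
    (hK : ∀ z ∈ K, e z 0 ∈ Icc a a' ∧ e z 1 ∈ Icc b b') :
    ∃ (w h : ℝ) (f : EuclideanSpace ℝ (Fin 2) → P), 0 ≤ h ∧ h ≤ w ∧ Isometry f ∧
      K ⊆ f '' {p | p 0 ∈ Icc 0 w ∧ p 1 ∈ Icc 0 h} ∧ w + 2 * h ≤ (a' - a) + 2 * (b' - b) := by
  rcases le_total (b' - b) (a' - a) with hle | hle
  · obtain ⟨f, hf, hKf⟩ := exists_isometry_subset_image_box e hK
    exact ⟨_, _, f, sub_nonneg.mpr hb, hle, hf, hKf, le_rfl⟩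
  · let swap := (LinearIsometryEquiv.piLpCongrLeft 2 ℝ ℝ (Equiv.swap (0 : Fin 2) 1)).toIsometryEquiv
    obtain ⟨f, hf, hKf⟩ := exists_isometry_subset_image_box (e.trans swap) fun z hz =>
      (hK z hz).symm
    exact ⟨_, _, f, sub_nonneg.mpr ha, hle, hf, hKf, by linarith⟩

/-- Any curve `γ : [0,1] → ℝ²` of finite length `L` can be enclosed in a
rectangle `Q` (an isometric image of a box `[0,w] × [0,h]` with `w ≥ h ≥ 0`) such that the total
length of the three shortest sides satisfies `w + 2h ≤ √2 · L`
(equivalently `per(Q) − long(Q) ≤ √2 · L`). -/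
theorem stmt_0 (γ : ℝ → EuclideanSpace ℝ (Fin 2)) (L : ℝ)
    (hcont : ContinuousOn γ (Set.Icc 0 1))
    (hfin : eVariationOn γ (Set.Icc 0 1) ≠ ⊤)
    (hL : L = (eVariationOn γ (Set.Icc 0 1)).toReal) :
    ∃ (w h : ℝ) (Q : Set (EuclideanSpace ℝ (Fin 2)))
      (f : EuclideanSpace ℝ (Fin 2) → EuclideanSpace ℝ (Fin 2)),
      0 ≤ h ∧ h ≤ w ∧ Isometry f ∧
      Q = f '' {p : EuclideanSpace ℝ (Fin 2) | p 0 ∈ Set.Icc 0 w ∧ p 1 ∈ Set.Icc 0 h} ∧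
      γ '' Set.Icc 0 1 ⊆ Q ∧
      w + 2 * h ≤ Real.sqrt 2 * L := by
  obtain ⟨R, hR⟩ := EuclideanSpace.exists_linearIsometryEquiv_apply_eq_single (γ 1 - γ 0) 0
  set x : ℝ → ℝ := fun t => R (γ t) 0
  set y : ℝ → ℝ := fun t => R (γ t) 1
  have hy : y 0 = y 1 := by
    linarith [show y 1 - y 0 = 0 by simpa [map_sub] using congrArg (· 1) hR]
  have hI : (Icc (0 : ℝ) 1).Nonempty := nonempty_Icc.2 zero_le_one
  obtain ⟨p, hp, hpmin⟩ := isCompact_Icc.exists_isMinOn hI (by fun_prop : ContinuousOn x _)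
  obtain ⟨q, hq, hqmax⟩ := isCompact_Icc.exists_isMaxOn hI (by fun_prop : ContinuousOn x _)
  obtain ⟨u, hu, humax⟩ := isCompact_Icc.exists_isMaxOn hI (by fun_prop : ContinuousOn y _)
  obtain ⟨v, hv, hvmin⟩ := isCompact_Icc.exists_isMinOn hI (by fun_prop : ContinuousOn y _)
  have hlen : (x q - x p) + 2 * (y u - y v) ≤ √2 * L := by
    have := eVariationOn.dist_add_two_mul_dist_le (Real.sqrt_nonneg 2)
      (fun a _ b _ => by simpa [x, y, R.dist_map] using
        EuclideanSpace.dist_apply_add_dist_apply_le (R (γ a)) (R (γ b)))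
      hfin (left_mem_Icc.2 zero_le_one) (right_mem_Icc.2 zero_le_one) hq hp hu hv hu.1 hu.2
      hv.1 hv.2 hy
    rw [Real.dist_eq, Real.dist_eq] at this
    rw [hL]
    linarith [le_abs_self (x q - x p), le_abs_self (y u - y v)]
  obtain ⟨w, h, f, hh, hhw, hf, hK, hwh⟩ := exists_rectangle_of_bounds R.toIsometryEquiv
    (K := γ '' Icc 0 1) (hpmin hq) (hvmin hu) (by
      rintro _ ⟨t, ht, rfl⟩
      exact ⟨⟨hpmin ht, hqmax ht⟩, ⟨hvmin ht, humax ht⟩⟩)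
  exact ⟨w, h, _, f, hh, hhw, hf, rfl, hK, hwh.trans hlen⟩
end

section
/- Let γ : [0,1] → ℝ² be a curve of finite length L whose endpoints a = γ(0) and b = γ(1) have equal y-coordinates. Let w = sup{x(p) : p ∈ im γ} − inf{x(p) : p ∈ im γ} and h = sup{y(p) : p ∈ im γ} − inf{y(p) : p ∈ im γ} be the width and height of the axis-aligned bounding box of the image of γ. Then w + 2h ≤ √2 · L. -/
/-!
Write `x` and `y` for the coordinates of `γ`. On each step of a partition
`|Δx| + |Δy| ≤ √2 |Δγ|`, and passing to a common refinement gives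
`Var x + Var y ≤ √2 L`. The width is a single increment of `x`, so `w ≤ Var x`. Since `y` starts
and ends at the same height, the `y`-coordinate has to travel from there to its maximum, between
maximum and minimum, and back, so `2h ≤ Var y`.
-/

open Set

namespace eVariationOn

variable {α E F G : Type*} [LinearOrder α] [PseudoEMetricSpace E] [PseudoEMetricSpace F]
  [PseudoEMetricSpace G]

theorem edist_add_edist_add_edist_le_s1 (f : α → E) {a s t b : α} (has : a ≤ s) (hst : s ≤ t)
    (htb : t ≤ b) :
    edist (f a) (f s) + edist (f s) (f t) + edist (f t) (f b) ≤ eVariationOn f (Icc a b) := by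
  have hIcc (c d : α) : eVariationOn f (Icc c d) = eVariationOn f (univ ∩ Icc c d) := by
    rw [univ_inter]
  calc _ ≤ eVariationOn f (Icc a s) + eVariationOn f (Icc s t) + eVariationOn f (Icc t b) := by
        gcongr <;> exact edist_le f (by simp [*]) (by simp [*])
    _ = eVariationOn f (Icc a b) := by
        simp only [hIcc]
        rw [Icc_add_Icc f has hst (mem_univ _), Icc_add_Icc f (has.trans hst) htb (mem_univ _)]

theorem two_mul_edist_le_of_eq_s1 {f : α → E} {a b s t : α} (hab : f a = f b) (hs : s ∈ Icc a b)
    (ht : t ∈ Icc a b) : 2 * edist (f s) (f t) ≤ eVariationOn f (Icc a b) := by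
  wlog hst : s ≤ t generalizing s t
  · rw [edist_comm]; exact this ht hs (le_of_not_ge hst)
  have hloop : edist (f s) (f t) ≤ edist (f a) (f s) + edist (f t) (f b) := by
    calc edist (f s) (f t) ≤ edist (f s) (f a) + edist (f a) (f t) := edist_triangle _ _ _
      _ = edist (f a) (f s) + edist (f t) (f b) := by
        rw [hab, edist_comm (f s), edist_comm (f b) (f t)]
  calc 2 * edist (f s) (f t) ≤ edist (f s) (f t) + (edist (f a) (f s) + edist (f t) (f b)) := by
        rw [two_mul]; gcongr
    _ = edist (f a) (f s) + edist (f s) (f t) + edist (f t) (f b) := by ring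
    _ ≤ eVariationOn f (Icc a b) := edist_add_edist_add_edist_le_s1 f hs.1 hst ht.2

theorem insert_of_forall_lt [DecidableEq α] (f : α → E) {a : α} {t : Finset α} (ht : t.Nonempty)
    (hlt : ∀ x ∈ t, x < a) :
    eVariationOn f ↑(insert a t) = eVariationOn f t + edist (f (t.max' ht)) (f a) := by
  have hb := t.max'_mem ht
  have hunion : (↑(insert a t) : Set α) = ↑t ∪ {t.max' ht, a} := by
    ext x
    simp only [Finset.coe_insert, mem_insert_iff, Finset.mem_coe, mem_union, mem_singleton_iff]
    grind
  rw [hunion, union f ⟨hb, fun x hx => t.le_max' x hx⟩ ⟨by simp, by simp [(hlt _ hb).le]⟩, pair]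

theorem add_le_mul_of_edist_add_le_finset [DecidableEq α] {f : α → E} {g : α → F} {φ : α → G}
    {C : ENNReal} (t : Finset α)
    (h : ∀ p ∈ t, ∀ q ∈ t, edist (f p) (f q) + edist (g p) (g q) ≤ C * edist (φ p) (φ q)) :
    eVariationOn f t + eVariationOn g t ≤ C * eVariationOn φ t := by
  induction t using Finset.induction_on_max with
  | empty => simp
  | insert a t hlt ih =>
    rcases t.eq_empty_or_nonempty with rfl | ht
    · simp
    have hsub : ∀ p ∈ t, p ∈ insert a t := fun p hp => Finset.mem_insert_of_mem hp
    rw [insert_of_forall_lt f ht hlt, insert_of_forall_lt g ht hlt, insert_of_forall_lt φ ht hlt,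
      mul_add, add_add_add_comm]
    exact add_le_add (ih fun p hp q hq => h p (hsub p hp) q (hsub q hq))
      (h _ (hsub _ (t.max'_mem ht)) a (Finset.mem_insert_self a t))

theorem add_le_mul_of_edist_add_le {f : α → E} {g : α → F} {φ : α → G} {C : ENNReal} {s : Set α}
    (h : ∀ p ∈ s, ∀ q ∈ s, edist (f p) (f q) + edist (g p) (g q) ≤ C * edist (φ p) (φ q)) :
    eVariationOn f s + eVariationOn g s ≤ C * eVariationOn φ s := by
  classical
  rcases s.eq_empty_or_nonempty with rfl | hs
  · simp
  have := nonempty_monotone_mem hs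
  refine ENNReal.iSup_add_iSup_le fun ⟨n, u, hu, us⟩ ⟨m, v, hv, vs⟩ => ?_
  -- Both partitions are dominated by their common refinement `t`.
  set t : Finset α := (Finset.range (n + 1)).image u ∪ (Finset.range (m + 1)).image v
  have hts : ↑t ⊆ s := by
    intro p hp
    simp only [t, Finset.coe_union, Finset.coe_image, mem_union, mem_image] at hp
    rcases hp with ⟨i, -, rfl⟩ | ⟨i, -, rfl⟩
    exacts [us i, vs i]
  calc _ ≤ eVariationOn f t + eVariationOn g t := by
        gcongr
        · exact sum_le_of_monotoneOn_Iic (hu.monotoneOn _) fun i hi => by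
            simpa [t] using Or.inl ⟨i, by omega, rfl⟩
        · exact sum_le_of_monotoneOn_Iic (hv.monotoneOn _) fun i hi => by
            simpa [t] using Or.inr ⟨i, by omega, rfl⟩
    _ ≤ C * eVariationOn φ t :=
        add_le_mul_of_edist_add_le_finset t fun p hp q hq => h p (hts hp) q (hts hq)
    _ ≤ C * eVariationOn φ s := by gcongr; exact mono φ hts

end eVariationOn

theorem Real.sSup_sub_sInf_le {s : Set ℝ} {C : ℝ} (hC : 0 ≤ C)
    (h : ∀ x ∈ s, ∀ y ∈ s, dist x y ≤ C) : sSup s - sInf s ≤ C := by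
  rw [← Real.diam_eq (Metric.isBounded_iff.2 ⟨C, h⟩)]
  exact Metric.diam_le_of_forall_dist_le hC h

theorem EuclideanSpace.abs_sub_add_abs_sub_le (p q : EuclideanSpace ℝ (Fin 2)) :
    |p 0 - q 0| + |p 1 - q 1| ≤ √2 * dist p q := by
  rw [EuclideanSpace.dist_eq, Fin.sum_univ_two, ← Real.sqrt_mul zero_le_two]
  apply Real.le_sqrt_of_sq_le
  simp only [Real.dist_eq, sq_abs]
  nlinarith [sq_nonneg (|p 0 - q 0| - |p 1 - q 1|), sq_abs (p 0 - q 0), sq_abs (p 1 - q 1)]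

theorem EuclideanSpace.edist_apply_add_edist_apply_le (p q : EuclideanSpace ℝ (Fin 2)) :
    edist (p 0) (q 0) + edist (p 1) (q 1) ≤ ENNReal.ofReal √2 * edist p q := by
  rw [edist_dist, edist_dist, edist_dist, Real.dist_eq, Real.dist_eq,
    ← ENNReal.ofReal_add (abs_nonneg _) (abs_nonneg _), ← ENNReal.ofReal_mul (Real.sqrt_nonneg 2)]
  exact ENNReal.ofReal_le_ofReal (abs_sub_add_abs_sub_le p q)

theorem BoundedVariationOn.two_mul_dist_le_of_eq {α E : Type*} [LinearOrder α]
    [PseudoMetricSpace E] {f : α → E} {a b s t : α} (hf : BoundedVariationOn f (Icc a b))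
    (hab : f a = f b) (hs : s ∈ Icc a b) (ht : t ∈ Icc a b) :
    2 * dist (f s) (f t) ≤ (eVariationOn f (Icc a b)).toReal := by
  rw [← ENNReal.ofReal_le_iff_le_toReal hf, ENNReal.ofReal_mul zero_le_two, ← edist_dist]
  simpa using eVariationOn.two_mul_edist_le_of_eq_s1 hab hs ht

theorem stmt_1_general (γ : ℝ → EuclideanSpace ℝ (Fin 2)) (L w h : ℝ)
    (hfin : eVariationOn γ (Set.Icc 0 1) ≠ ⊤)
    (hL : L = (eVariationOn γ (Set.Icc 0 1)).toReal)
    (hend : γ 0 1 = γ 1 1)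
    (hw : w = sSup ((fun t => γ t 0) '' Set.Icc 0 1) - sInf ((fun t => γ t 0) '' Set.Icc 0 1))
    (hh : h = sSup ((fun t => γ t 1) '' Set.Icc 0 1) - sInf ((fun t => γ t 1) '' Set.Icc 0 1)) :
    w + 2 * h ≤ Real.sqrt 2 * L := by
  set x : ℝ → ℝ := fun t => γ t 0
  set y : ℝ → ℝ := fun t => γ t 1
  set I : Set ℝ := Icc 0 1
  have hsum : eVariationOn x I + eVariationOn y I ≤ ENNReal.ofReal (√2 * L) := by
    rw [hL, ENNReal.ofReal_mul (Real.sqrt_nonneg 2), ENNReal.ofReal_toReal hfin]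
    exact eVariationOn.add_le_mul_of_edist_add_le fun p _ q _ =>
      EuclideanSpace.edist_apply_add_edist_apply_le (γ p) (γ q)
  have hx : BoundedVariationOn x I :=
    ne_top_of_le_ne_top ENNReal.ofReal_ne_top (le_self_add.trans hsum)
  have hy : BoundedVariationOn y I :=
    ne_top_of_le_ne_top ENNReal.ofReal_ne_top (le_add_self.trans hsum)
  have hw' : w ≤ (eVariationOn x I).toReal := by
    rw [hw]
    refine Real.sSup_sub_sInf_le ENNReal.toReal_nonneg ?_
    rintro _ ⟨s, hs, rfl⟩ _ ⟨t, ht, rfl⟩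
    exact hx.dist_le hs ht
  have hh' : 2 * h ≤ (eVariationOn y I).toReal := by
    rw [hh, ← le_div_iff₀' two_pos]
    refine Real.sSup_sub_sInf_le (by positivity) ?_
    rintro _ ⟨s, hs, rfl⟩ _ ⟨t, ht, rfl⟩
    exact (le_div_iff₀' two_pos).2 (hy.two_mul_dist_le_of_eq hend hs ht)
  calc w + 2 * h ≤ (eVariationOn x I).toReal + (eVariationOn y I).toReal :=
        add_le_add hw' hh'
    _ = (eVariationOn x I + eVariationOn y I).toReal := (ENNReal.toReal_add hx hy).symm
    _ ≤ √2 * L := by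
        have hL0 : 0 ≤ L := hL ▸ ENNReal.toReal_nonneg
        rw [← ENNReal.toReal_ofReal (by positivity : 0 ≤ √2 * L)]
        exact ENNReal.toReal_mono ENNReal.ofReal_ne_top hsum

/-- For a curve `γ : [0,1] → ℝ²` of finite length `L` whose endpoints have
equal `y`-coordinates, the width `w` and height `h` of the axis-aligned bounding box of the
image of `γ` satisfy `w + 2h ≤ √2 · L`. -/
theorem stmt_1 (γ : ℝ → EuclideanSpace ℝ (Fin 2)) (L w h : ℝ)
    (hcont : ContinuousOn γ (Set.Icc 0 1))
    (hfin : eVariationOn γ (Set.Icc 0 1) ≠ ⊤)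
    (hL : L = (eVariationOn γ (Set.Icc 0 1)).toReal)
    (hend : γ 0 1 = γ 1 1)
    (hw : w = sSup ((fun t => γ t 0) '' Set.Icc 0 1) - sInf ((fun t => γ t 0) '' Set.Icc 0 1))
    (hh : h = sSup ((fun t => γ t 1) '' Set.Icc 0 1) - sInf ((fun t => γ t 1) '' Set.Icc 0 1)) :
    w + 2 * h ≤ Real.sqrt 2 * L :=
  stmt_1_general γ L w h hfin hL hend hw hh
end

section
/- Let γ be the polygonal path in ℝ² consisting of the two unit segments from a = (1,0) to c = (0,0) and from c to b = (0,1), i.e., the set [a,c] ∪ [c,b] (a curve of length 2 forming the two legs of an isosceles right triangle). Then every rectangle Q with side lengths w and h containing γ satisfies per(Q) − long(Q) = max(w,h) + 2·min(w,h) ≥ 2√2; that is, the bound per(Q) − long(Q) ≤ √2 · len(γ) is attained and cannot be improved. -/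
open Set

/-!
Pull the corners `a = (1,0)`, `c = (0,0)`, `b = (0,1)` back along the isometry: they become a
right isosceles triangle `A, C, B` with unit legs inside the box `[0,w] × [0,h]`. Let `p, q` be
the coordinate spans of its hypotenuse `AB`, so `p² + q² = 2`, `p ≤ w` and `q ≤ h`. Since
`B - C` is `A - C` turned by a right angle, the other diagonal `(A - C) + (B - C)` of the unit
square on the legs has coordinate spans `q, p`; as `|x - y| + |x + y| = 2 max(|x|, |y|)`, this
yields `p + q ≤ 2 min(w, h)`. Hence `max(w,h) + 2 min(w,h) ≥ max(p,q) + p + q ≥ 2√2`.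
-/

lemma EuclideanSpace.dist_sq_eq_fin_two (x y : EuclideanSpace ℝ (Fin 2)) :
    dist x y ^ 2 = (x 0 - y 0) ^ 2 + (x 1 - y 1) ^ 2 := by
  simp [EuclideanSpace.dist_sq_eq, Fin.sum_univ_two, Real.dist_eq, sq_abs]

lemma sq_add_eq_sq_sub_of_orthonormal {α : Type*} [CommRing α] {u₁ u₂ v₁ v₂ : α}
    (hu : u₁ ^ 2 + u₂ ^ 2 = 1) (hv : v₁ ^ 2 + v₂ ^ 2 = 1) (huv : u₁ * v₁ + u₂ * v₂ = 0) :
    (u₁ + v₁) ^ 2 = (u₂ - v₂) ^ 2 := by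
  -- the columns of an orthogonal matrix are orthonormal too: `u₁² + v₁² = 1`
  linear_combination
    2 * ((u₁ * v₁ - u₂ * v₂) * huv + v₂ ^ 2 * hu + (1 - u₁ ^ 2) * hv) - hu - hv + 2 * huv

section LinearOrderedField

variable {α : Type*} [Field α] [LinearOrder α] [IsStrictOrderedRing α]

lemma abs_sub_add_abs_add_le {x y w : α} (hx : |x| ≤ w) (hy : |y| ≤ w) :
    |x - y| + |x + y| ≤ 2 * w := by
  rcases abs_cases (x - y) with ⟨h₁, -⟩ | ⟨h₁, -⟩ <;>
    rcases abs_cases (x + y) with ⟨h₂, -⟩ | ⟨h₂, -⟩ <;>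
    linarith [abs_le.1 hx, abs_le.1 hy]

lemma abs_sub_add_abs_sub_le_of_orthonormal {u₁ u₂ v₁ v₂ w : α} (hu : u₁ ^ 2 + u₂ ^ 2 = 1)
    (hv : v₁ ^ 2 + v₂ ^ 2 = 1) (huv : u₁ * v₁ + u₂ * v₂ = 0) (hu₁ : |u₁| ≤ w) (hv₁ : |v₁| ≤ w) :
    |u₁ - v₁| + |u₂ - v₂| ≤ 2 * w := by
  rw [← (sq_eq_sq_iff_abs_eq_abs _ _).1 (sq_add_eq_sq_sub_of_orthonormal hu hv huv)]
  exact abs_sub_add_abs_add_le hu₁ hv₁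

end LinearOrderedField

lemma two_mul_sqrt_two_le_max_add_add {p q : ℝ} (hp : 0 ≤ p) (hq : 0 ≤ q)
    (hpq : p ^ 2 + q ^ 2 = 2) : 2 * √2 ≤ max p q + (p + q) := by
  wlog hqp : q ≤ p generalizing p q
  · rw [max_comm, add_comm p]
    exact this hq hp (by linarith) (by linarith)
  rw [max_eq_left hqp]
  -- `(2p + q)² = 8 + q (4p - 3q)`
  have h8 : (2 * √2) ^ 2 ≤ (2 * p + q) ^ 2 := by
    rw [mul_pow, Real.sq_sqrt zero_le_two]
    nlinarith [mul_nonneg hq (by linarith : 0 ≤ 4 * p - 3 * q)]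
  linarith [(pow_le_pow_iff_left₀ (by positivity) (by positivity) two_ne_zero).1 h8]

lemma two_mul_sqrt_two_le_of_right_isosceles_mem_box {w h : ℝ}
    {A B C : EuclideanSpace ℝ (Fin 2)} (hA : A 0 ∈ Icc 0 w ∧ A 1 ∈ Icc 0 h)
    (hB : B 0 ∈ Icc 0 w ∧ B 1 ∈ Icc 0 h) (hC : C 0 ∈ Icc 0 w ∧ C 1 ∈ Icc 0 h)
    (hAC : dist A C ^ 2 = 1) (hBC : dist B C ^ 2 = 1) (hAB : dist A B ^ 2 = 2) :
    2 * √2 ≤ max w h + 2 * min w h := by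
  simp only [EuclideanSpace.dist_sq_eq_fin_two] at hAC hBC hAB
  have hbox {x y b : ℝ} (hx : x ∈ Icc 0 b) (hy : y ∈ Icc 0 b) : |x - y| ≤ b :=
    abs_sub_le_of_nonneg_of_le hx.1 hx.2 hy.1 hy.2
  have horth : (A 0 - C 0) * (B 0 - C 0) + (A 1 - C 1) * (B 1 - C 1) = 0 := by
    linear_combination (hAC + hBC - hAB) / 2
  have hw : |A 0 - B 0| + |A 1 - B 1| ≤ 2 * w := by
    simpa only [sub_sub_sub_cancel_right] using abs_sub_add_abs_sub_le_of_orthonormal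
      hAC hBC horth (hbox hA.1 hC.1) (hbox hB.1 hC.1)
  have hh : |A 1 - B 1| + |A 0 - B 0| ≤ 2 * h := by
    simpa only [sub_sub_sub_cancel_right] using abs_sub_add_abs_sub_le_of_orthonormal
      (u₂ := A 0 - C 0) (v₂ := B 0 - C 0) (by linarith) (by linarith) (by linarith)
      (hbox hA.2 hC.2) (hbox hB.2 hC.2)
  calc 2 * √2 ≤ max |A 0 - B 0| |A 1 - B 1| + (|A 0 - B 0| + |A 1 - B 1|) :=
        two_mul_sqrt_two_le_max_add_add (abs_nonneg _) (abs_nonneg _) (by simpa only [sq_abs])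
    _ ≤ max w h + 2 * min w h := by
        refine add_le_add (max_le_max (hbox hA.1 hB.1) (hbox hA.2 hB.2)) ?_
        rw [mul_min_of_nonneg _ _ zero_le_two]
        exact le_min hw (by linarith)

theorem stmt_2_general (w h : ℝ)
    (Q : Set (EuclideanSpace ℝ (Fin 2)))
    (f : EuclideanSpace ℝ (Fin 2) → EuclideanSpace ℝ (Fin 2))
    (hf : Isometry f)
    (hQ : Q = f '' {p : EuclideanSpace ℝ (Fin 2) | p 0 ∈ Set.Icc 0 w ∧ p 1 ∈ Set.Icc 0 h})
    (hsub : segment ℝ (!₂[1, 0] : EuclideanSpace ℝ (Fin 2)) !₂[0, 0] ∪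
        segment ℝ (!₂[0, 0] : EuclideanSpace ℝ (Fin 2)) !₂[0, 1] ⊆ Q) :
    max w h + 2 * min w h ≥ 2 * Real.sqrt 2 := by
  subst hQ
  obtain ⟨A, hA, hfA⟩ := hsub (Or.inl (left_mem_segment ℝ _ _))
  obtain ⟨C, hC, hfC⟩ := hsub (Or.inl (right_mem_segment ℝ _ _))
  obtain ⟨B, hB, hfB⟩ := hsub (Or.inr (right_mem_segment ℝ _ _))
  have hdist {x y : EuclideanSpace ℝ (Fin 2)} {d : ℝ} (hxy : dist (f x) (f y) ^ 2 = d) :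
      dist x y ^ 2 = d := by
    rwa [hf.dist_eq] at hxy
  refine two_mul_sqrt_two_le_of_right_isosceles_mem_box hA hB hC
    (hdist ?_) (hdist ?_) (hdist ?_) <;>
    norm_num [hfA, hfB, hfC, EuclideanSpace.dist_sq_eq_fin_two]

/-- Tightness of the bound in Lemma 3: for the polygonal path
`γ = [a,c] ∪ [c,b]` with `a = (1,0)`, `c = (0,0)`, `b = (0,1)` (two unit legs of an isosceles
right triangle, so of length `2`), every rectangle with side lengths `w, h` containing `γ`
satisfies `max(w,h) + 2·min(w,h) ≥ 2√2 = √2 · len(γ)`. -/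
theorem stmt_2 (w h : ℝ) (hw : 0 ≤ w) (hh : 0 ≤ h)
    (Q : Set (EuclideanSpace ℝ (Fin 2)))
    (f : EuclideanSpace ℝ (Fin 2) → EuclideanSpace ℝ (Fin 2))
    (hf : Isometry f)
    (hQ : Q = f '' {p : EuclideanSpace ℝ (Fin 2) | p 0 ∈ Set.Icc 0 w ∧ p 1 ∈ Set.Icc 0 h})
    (hsub : segment ℝ (!₂[1, 0] : EuclideanSpace ℝ (Fin 2)) !₂[0, 0] ∪
        segment ℝ (!₂[0, 0] : EuclideanSpace ℝ (Fin 2)) !₂[0, 1] ⊆ Q) :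
    max w h + 2 * min w h ≥ 2 * Real.sqrt 2 :=
  stmt_2_general w h Q f hf hQ hsub
end

section
/- Let γ : [0,1] → ℝ² be a curve of finite length L. Then there exists a rectangle Q containing the image of γ with perimeter per(Q) ≤ √5 · L. -/
/-!
Rotate the plane so that the endpoints `γ 0` and `γ 1` have the same second coordinate, and
enclose the rotated curve `(u, v)` in its axis-parallel bounding box, of width `w` and height `h`.
The first coordinate has variation at least `w`. The second one starts and ends at the same value,
so it has to climb to the top of the box and descend to its bottom and back: its variation is at
least `2 h`. Since `2 |Δu| + |Δv| ≤ √5 |Δγ|` by Cauchy–Schwarz, adding over a common refinement of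
partitions gives `2 Var u + Var v ≤ √5 L`, whence `2 (w + h) ≤ √5 L`.
-/

open Set
open scoped ENNReal RealInnerProductSpace

section Variation

variable {α : Type*} [LinearOrder α] {E F G : Type*} [PseudoEMetricSpace E]
  [PseudoEMetricSpace F] [PseudoEMetricSpace G]

theorem eVariationOn_insert_of_isGreatest (f : α → E) {s : Set α} {m a : α}
    (hm : IsGreatest s m) (hma : m ≤ a) :
    eVariationOn f (insert a s) = eVariationOn f s + edist (f m) (f a) := by
  have hsplit : insert a s = s ∪ {m, a} := by
    ext x; simp only [mem_insert_iff, mem_union]; grind [hm.1]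
  rw [hsplit, eVariationOn.union f hm (by simp [IsLeast, lowerBounds, hma]), eVariationOn.pair]

theorem eVariationOn_add_le_mul_of_finset {f : α → E} {g₁ : α → F} {g₂ : α → G} {C : ℝ≥0∞}
    (h : ∀ x y, edist (g₁ x) (g₁ y) + edist (g₂ x) (g₂ y) ≤ C * edist (f x) (f y))
    (s : Finset α) :
    eVariationOn g₁ s + eVariationOn g₂ s ≤ C * eVariationOn f s := by
  classical
  induction s using Finset.induction_on_max with
  | empty => simp
  | insert a s has ih =>
    rcases s.eq_empty_or_nonempty with rfl | hs
    · simp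
    have hm := s.isGreatest_max' hs
    have hma := (has _ (s.max'_mem hs)).le
    simp only [Finset.coe_insert, eVariationOn_insert_of_isGreatest _ hm hma, mul_add]
    rw [add_add_add_comm]
    exact add_le_add ih (h _ _)

theorem eVariationOn_add_le_mul {f : α → E} {g₁ : α → F} {g₂ : α → G} {C : ℝ≥0∞}
    (h : ∀ x y, edist (g₁ x) (g₁ y) + edist (g₂ x) (g₂ y) ≤ C * edist (f x) (f y))
    (s : Set α) :
    eVariationOn g₁ s + eVariationOn g₂ s ≤ C * eVariationOn f s := by
  rcases s.eq_empty_or_nonempty with rfl | hs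
  · simp
  have := eVariationOn.nonempty_monotone_mem hs
  refine ENNReal.iSup_add_iSup_le fun ⟨m, u, hu, us⟩ ⟨n, v, hv, vs⟩ ↦ ?_
  have hA : (u '' Iic m ∪ v '' Iic n).Finite :=
    ((finite_Iic m).image u).union ((finite_Iic n).image v)
  have hAs : u '' Iic m ∪ v '' Iic n ⊆ s := union_subset (by grind) (by grind)
  calc _ = eVariationOn g₁ (u '' Iic m) + eVariationOn g₂ (v '' Iic n) := by
        simp only [eVariationOn.image_range_of_monotone _ hu,
          eVariationOn.image_range_of_monotone _ hv, edist_comm]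
    _ ≤ eVariationOn g₁ hA.toFinset + eVariationOn g₂ hA.toFinset := by
        rw [hA.coe_toFinset]
        gcongr <;> apply eVariationOn.mono <;> simp
    _ ≤ C * eVariationOn f hA.toFinset := eVariationOn_add_le_mul_of_finset h _
    _ ≤ C * eVariationOn f s := by
        rw [hA.coe_toFinset]
        gcongr
        exact eVariationOn.mono f hAs

theorem two_mul_edist_le_eVariationOn_of_eq {g : α → E} {s : Set α} {a b x y : α}
    (ha : a ∈ s) (hb : b ∈ s) (hx : x ∈ s) (hy : y ∈ s) (hxab : x ∈ Icc a b) (hyab : y ∈ Icc a b)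
    (hgab : g a = g b) :
    2 * edist (g x) (g y) ≤ eVariationOn g s := by
  wlog hxy : x ≤ y generalizing x y
  · rw [edist_comm]; exact this hy hx hyab hxab (le_of_not_ge hxy)
  calc 2 * edist (g x) (g y)
      ≤ edist (g a) (g x) + edist (g x) (g y) + edist (g y) (g b) := by
        rw [two_mul, add_right_comm]
        gcongr
        rw [edist_comm (g a), edist_comm (g y), hgab]
        exact edist_triangle _ _ _
    _ ≤ eVariationOn g (s ∩ Icc a x) + eVariationOn g (s ∩ Icc x y)
          + eVariationOn g (s ∩ Icc y b) := by
        gcongr <;> apply eVariationOn.edist_le <;> grind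
    _ = eVariationOn g (s ∩ Icc a b) := by
        rw [eVariationOn.Icc_add_Icc g hxab.1 hxy hx,
          eVariationOn.Icc_add_Icc g (hxab.1.trans hxy) hyab.2 hy]
    _ ≤ eVariationOn g s := eVariationOn.mono g inter_subset_left

end Variation

theorem exists_orthonormalBasis_inner_eq_zero {E ι : Type*} [NormedAddCommGroup E]
    [InnerProductSpace ℝ E] [FiniteDimensional ℝ E] [Fintype ι]
    (hcard : Module.finrank ℝ E = Fintype.card ι) (i₀ : ι) (d : E) :
    ∃ b : OrthonormalBasis ι ℝ E, ∀ i ≠ i₀, ⟪b i, d⟫ = 0 := by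
  classical
  obtain ⟨e, he, hde⟩ : ∃ e : E, ‖e‖ = 1 ∧ d = ‖d‖ • e := by
    by_cases hd : d = 0
    · have : Nontrivial E :=
        Module.nontrivial_of_finrank_pos (R := ℝ) (hcard ▸ Fintype.card_pos_iff.mpr ⟨i₀⟩)
      obtain ⟨e, he⟩ := exists_norm_eq E zero_le_one
      exact ⟨e, he, by simp [hd]⟩
    · refine ⟨‖d‖⁻¹ • d, by simp [norm_smul, hd], ?_⟩
      rw [smul_smul, mul_inv_cancel₀ (norm_ne_zero_iff.mpr hd), one_smul]
  obtain ⟨b, hb⟩ := Orthonormal.exists_orthonormalBasis_extension_of_card_eq hcard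
    (v := fun _ ↦ e) (s := {i₀}) (by simp [he])
  refine ⟨b, fun i hi ↦ ?_⟩
  rw [hde, inner_smul_right, ← hb i₀ rfl, b.orthonormal.inner_eq_zero hi, mul_zero]

theorem two_mul_abs_add_abs_le_sqrt_five_mul_norm (p : EuclideanSpace ℝ (Fin 2)) :
    2 * |p 0| + |p 1| ≤ √5 * ‖p‖ := by
  rw [EuclideanSpace.norm_eq, Fin.sum_univ_two, ← Real.sqrt_mul (by norm_num)]
  apply Real.le_sqrt_of_sq_le
  simp only [Real.norm_eq_abs, sq_abs]
  nlinarith [sq_nonneg (|p 0| - 2 * |p 1|), sq_abs (p 0), sq_abs (p 1)]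

theorem ofReal_two_mul_abs_add_abs_le_sqrt_five_mul_eVariationOn
    {δ : ℝ → EuclideanSpace ℝ (Fin 2)} {a b x₁ x₂ y₁ y₂ : ℝ} (hx₁ : x₁ ∈ Icc a b)
    (hx₂ : x₂ ∈ Icc a b) (hy₁ : y₁ ∈ Icc a b) (hy₂ : y₂ ∈ Icc a b) (hab : δ a 1 = δ b 1) :
    ENNReal.ofReal (2 * (|δ x₁ 0 - δ x₂ 0| + |δ y₁ 1 - δ y₂ 1|)) ≤
      ENNReal.ofReal √5 * eVariationOn δ (Icc a b) := by
  have hpoint : ∀ s t, edist (2 * δ s 0) (2 * δ t 0) + edist (δ s 1) (δ t 1) ≤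
      ENNReal.ofReal √5 * edist (δ s) (δ t) := by
    intro s t
    have := two_mul_abs_add_abs_le_sqrt_five_mul_norm (δ s - δ t)
    simp only [edist_dist, dist_eq_norm, ← mul_sub]
    rw [← ENNReal.ofReal_add (by positivity) (by positivity),
      ← ENNReal.ofReal_mul (by positivity)]
    exact ENNReal.ofReal_le_ofReal (by simpa using this)
  have hab' : a ≤ b := hx₁.1.trans hx₁.2
  have hu : ENNReal.ofReal (2 * |δ x₁ 0 - δ x₂ 0|) ≤
      eVariationOn (fun t ↦ 2 * δ t 0) (Icc a b) := by
    simpa [edist_dist, Real.dist_eq, ← mul_sub, abs_mul] using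
      eVariationOn.edist_le (fun t ↦ 2 * δ t 0) hx₁ hx₂
  have hv : ENNReal.ofReal (2 * |δ y₁ 1 - δ y₂ 1|) ≤ eVariationOn (fun t ↦ δ t 1) (Icc a b) := by
    have := two_mul_edist_le_eVariationOn_of_eq (g := fun t ↦ δ t 1) (left_mem_Icc.mpr hab')
      (right_mem_Icc.mpr hab') hy₁ hy₂ hy₁ hy₂ hab
    simpa [edist_dist, Real.dist_eq, ENNReal.ofReal_mul] using this
  calc ENNReal.ofReal (2 * (|δ x₁ 0 - δ x₂ 0| + |δ y₁ 1 - δ y₂ 1|))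
      = ENNReal.ofReal (2 * |δ x₁ 0 - δ x₂ 0|) + ENNReal.ofReal (2 * |δ y₁ 1 - δ y₂ 1|) := by
        rw [mul_add, ENNReal.ofReal_add (by positivity) (by positivity)]
    _ ≤ _ := add_le_add hu hv
    _ ≤ _ := eVariationOn_add_le_mul hpoint _

theorem subset_image_box_of_forall_mem_Icc {E : Type*} [PseudoEMetricSpace E]
    (e : E ≃ᵢ EuclideanSpace ℝ (Fin 2)) {S : Set E} {x₀ x₁ y₀ y₁ : ℝ}
    (hS : ∀ p ∈ S, e p 0 ∈ Icc x₀ x₁ ∧ e p 1 ∈ Icc y₀ y₁) :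
    S ⊆ (fun q ↦ e.symm (q + !₂[x₀, y₀])) ''
      {q : EuclideanSpace ℝ (Fin 2) | q 0 ∈ Icc 0 (x₁ - x₀) ∧ q 1 ∈ Icc 0 (y₁ - y₀)} := by
  intro p hp
  refine ⟨e p - !₂[x₀, y₀], ?_, by simp⟩
  simpa [sub_nonneg] using hS p hp

/-- Any curve `γ : [0,1] → ℝ²` of finite length `L` can be enclosed in a
rectangle `Q` (an isometric image of a box `[0,w] × [0,h]` with `w, h ≥ 0`) of perimeter
`per(Q) = 2(w + h) ≤ √5 · L`. -/
theorem stmt_3 (γ : ℝ → EuclideanSpace ℝ (Fin 2)) (L : ℝ)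
    (hcont : ContinuousOn γ (Set.Icc 0 1))
    (hfin : eVariationOn γ (Set.Icc 0 1) ≠ ⊤)
    (hL : L = (eVariationOn γ (Set.Icc 0 1)).toReal) :
    ∃ (w h : ℝ) (Q : Set (EuclideanSpace ℝ (Fin 2)))
      (f : EuclideanSpace ℝ (Fin 2) → EuclideanSpace ℝ (Fin 2)),
      0 ≤ w ∧ 0 ≤ h ∧ Isometry f ∧
      Q = f '' {p : EuclideanSpace ℝ (Fin 2) | p 0 ∈ Set.Icc 0 w ∧ p 1 ∈ Set.Icc 0 h} ∧
      γ '' Set.Icc 0 1 ⊆ Q ∧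
      2 * (w + h) ≤ Real.sqrt 5 * L := by
  obtain ⟨b, hb⟩ := exists_orthonormalBasis_inner_eq_zero (by simp) (0 : Fin 2) (γ 1 - γ 0)
  set e := b.repr.toIsometryEquiv
  set δ : ℝ → EuclideanSpace ℝ (Fin 2) := fun t ↦ e (γ t)
  have hlevel : δ 0 1 = δ 1 1 := by
    have := hb 1 (by decide)
    simp only [inner_sub_right, sub_eq_zero] at this
    simp [δ, e, b.repr_apply_apply, this]
  have hcoord (i : Fin 2) : ContinuousOn (fun t ↦ δ t i) (Icc 0 1) :=
    ((EuclideanSpace.proj i).continuous.comp e.continuous).comp_continuousOn hcont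
  have hne : (Icc (0 : ℝ) 1).Nonempty := nonempty_Icc.mpr zero_le_one
  obtain ⟨tl, htl, hmin_u⟩ := isCompact_Icc.exists_isMinOn hne (hcoord 0)
  obtain ⟨tr, htr, hmax_u⟩ := isCompact_Icc.exists_isMaxOn hne (hcoord 0)
  obtain ⟨tb, htb, hmin_v⟩ := isCompact_Icc.exists_isMinOn hne (hcoord 1)
  obtain ⟨tt, htt, hmax_v⟩ := isCompact_Icc.exists_isMaxOn hne (hcoord 1)
  have hvar : eVariationOn δ (Icc 0 1) ≤ eVariationOn γ (Icc 0 1) := by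
    have := e.isometry.lipschitz.lipschitzOnWith.comp_eVariationOn_le (mapsTo_univ γ (Icc 0 1))
    rwa [ENNReal.coe_one, one_mul] at this
  have hw : 0 ≤ δ tr 0 - δ tl 0 := sub_nonneg.mpr (hmin_u htr)
  have hh : 0 ≤ δ tt 1 - δ tb 1 := sub_nonneg.mpr (hmin_v htt)
  have hper := ofReal_two_mul_abs_add_abs_le_sqrt_five_mul_eVariationOn htr htl htt htb hlevel
  rw [abs_of_nonneg hw, abs_of_nonneg hh] at hper
  refine ⟨_, _, _, _, hw, hh, e.symm.isometry.comp (isometry_add_right _), rfl,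
    subset_image_box_of_forall_mem_Icc e ?_, ?_⟩
  · rintro _ ⟨t, ht, rfl⟩
    exact ⟨⟨hmin_u ht, hmax_u ht⟩, hmin_v ht, hmax_v ht⟩
  · rw [hL, ← ENNReal.ofReal_le_ofReal_iff (by positivity),
      ENNReal.ofReal_mul (Real.sqrt_nonneg 5), ENNReal.ofReal_toReal hfin]
    exact hper.trans (by gcongr)
end

section
/- Let ρ be a ray with apex p = (p₁, p₂) and direction d = (d₁, d₂) with d₁ > 0 and d₂ > 0 (a ray belonging to the first quadrant), and let Q = [x₁, x₂] × [y₁, y₂] with x₁ ≤ x₂ and y₁ ≤ y₂. Then ρ intersects Q if and only if (i) the corners q₂ = (x₂, y₁) and q₄ = (x₁, y₂) lie on opposite closed sides of the supporting line of ρ, i.e., the cross products (q₂ − p) × d and (q₄ − p) × d (where (u₁,u₂) × (v₁,v₂) = u₁v₂ − u₂v₁) satisfy ((q₂ − p) × d) · ((q₄ − p) × d) ≤ 0, and (ii) the apex is dominated by q₃ = (x₂, y₂), i.e., p₁ ≤ x₂ and p₂ ≤ y₂. -/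
/-! A point `p + t d` of the ray lies in `Q` iff the parameter `t ≥ 0` lies in both slabs
`[(x₁ - p₁)/d₁, (x₂ - p₁)/d₁]` and `[(y₁ - p₂)/d₂, (y₂ - p₂)/d₂]`. Three intervals on a line
meet iff every lower end is below every upper end. Of these comparisons, two hold because `Q`
is nonempty, two say that `q₃` dominates `p`, and the two cross-slab ones say that the
cross products at `q₂` and `q₄` are `≥ 0` and `≤ 0`. As the cross product at `q₂` is never
smaller than the one at `q₄`, the latter pair is equivalent to their product being `≤ 0`. -/

open Set

lemma mul_nonpos_iff_of_le {R : Type*} [Ring R] [LinearOrder R] [IsStrictOrderedRing R]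
    {a b : R} (hba : b ≤ a) : a * b ≤ 0 ↔ 0 ≤ a ∧ b ≤ 0 := by
  rw [mul_nonpos_iff]
  constructor
  · rintro (h | ⟨ha, hb⟩)
    · exact h
    · exact ⟨hb.trans hba, hba.trans ha⟩
  · exact Or.inl

lemma add_mul_mem_Icc_iff {K : Type*} [Field K] [LinearOrder K] [IsStrictOrderedRing K]
    {p d a b t : K} (hd : 0 < d) :
    p + t * d ∈ Icc a b ↔ t ∈ Icc ((a - p) / d) ((b - p) / d) := by
  simp only [mem_Icc, div_le_iff₀ hd, le_div_iff₀ hd]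
  constructor <;> rintro ⟨h₁, h₂⟩ <;> constructor <;> linarith

lemma nonempty_Ici_inter_Icc_inter_Icc {α : Type*} [LinearOrder α] {c a₁ b₁ a₂ b₂ : α}
    (h₁ : a₁ ≤ b₁) (h₂ : a₂ ≤ b₂) :
    (Ici c ∩ Icc a₁ b₁ ∩ Icc a₂ b₂).Nonempty ↔ c ≤ b₁ ∧ c ≤ b₂ ∧ a₁ ≤ b₂ ∧ a₂ ≤ b₁ := by
  constructor
  · rintro ⟨t, ⟨hc, ha₁, hb₁⟩, ha₂, hb₂⟩
    exact ⟨hc.trans hb₁, hc.trans hb₂, ha₁.trans hb₂, ha₂.trans hb₁⟩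
  · rintro ⟨hcb₁, hcb₂, hab₂, hab₁⟩
    exact ⟨max (max c a₁) a₂,
      ⟨le_max_of_le_left (le_max_left _ _), le_max_of_le_left (le_max_right _ _),
        max_le (max_le hcb₁ h₁) hab₁⟩,
      le_max_right _ _, max_le (max_le hcb₂ hab₂) h₂⟩

/-- A ray with apex `p = (p₁,p₂)` and direction `d = (d₁,d₂)`, `d₁, d₂ > 0`
(first quadrant), intersects the axis-parallel rectangle `Q = [x₁,x₂] × [y₁,y₂]` iff
(i) the corners `q₂ = (x₂,y₁)` and `q₄ = (x₁,y₂)` lie on opposite closed sides of the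
supporting line of the ray, i.e. `((q₂ − p) × d) · ((q₄ − p) × d) ≤ 0` where
`(u₁,u₂) × (v₁,v₂) = u₁v₂ − u₂v₁`, and (ii) the apex is dominated by `q₃ = (x₂,y₂)`. -/
theorem stmt_10 (p₁ p₂ d₁ d₂ x₁ x₂ y₁ y₂ : ℝ) (hd₁ : 0 < d₁) (hd₂ : 0 < d₂)
    (hx : x₁ ≤ x₂) (hy : y₁ ≤ y₂) :
    ({q : ℝ × ℝ | ∃ t : ℝ, 0 ≤ t ∧ q = (p₁ + t * d₁, p₂ + t * d₂)} ∩
        Set.Icc x₁ x₂ ×ˢ Set.Icc y₁ y₂).Nonempty ↔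
      ((x₂ - p₁) * d₂ - (y₁ - p₂) * d₁) * ((x₁ - p₁) * d₂ - (y₂ - p₂) * d₁) ≤ 0 ∧
        p₁ ≤ x₂ ∧ p₂ ≤ y₂ := by
  have hparam : ({q : ℝ × ℝ | ∃ t : ℝ, 0 ≤ t ∧ q = (p₁ + t * d₁, p₂ + t * d₂)} ∩
        Icc x₁ x₂ ×ˢ Icc y₁ y₂).Nonempty ↔
      (Ici 0 ∩ Icc ((x₁ - p₁) / d₁) ((x₂ - p₁) / d₁) ∩
        Icc ((y₁ - p₂) / d₂) ((y₂ - p₂) / d₂)).Nonempty := by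
    constructor
    · rintro ⟨_, ⟨t, ht, rfl⟩, htx, hty⟩
      exact ⟨t, ⟨ht, (add_mul_mem_Icc_iff hd₁).1 htx⟩, (add_mul_mem_Icc_iff hd₂).1 hty⟩
    · rintro ⟨t, ⟨ht, htx⟩, hty⟩
      exact ⟨_, ⟨t, ht, rfl⟩, (add_mul_mem_Icc_iff hd₁).2 htx, (add_mul_mem_Icc_iff hd₂).2 hty⟩
  have hcross : (x₁ - p₁) * d₂ - (y₂ - p₂) * d₁ ≤ (x₂ - p₁) * d₂ - (y₁ - p₂) * d₁ := by
    linarith [mul_nonneg (sub_nonneg.2 hx) hd₂.le, mul_nonneg (sub_nonneg.2 hy) hd₁.le]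
  rw [hparam, nonempty_Ici_inter_Icc_inter_Icc (by gcongr) (by gcongr),
    mul_nonpos_iff_of_le hcross, le_div_iff₀ hd₁, le_div_iff₀ hd₂,
    div_le_div_iff₀ hd₁ hd₂, div_le_div_iff₀ hd₂ hd₁]
  simp only [zero_mul, sub_nonneg, sub_nonpos]
  tauto
end

section
/- Let ρ be a ray with apex p = (p₁, p₂) and direction d = (d₁, d₂) with d₁ < 0 and d₂ > 0 (a ray belonging to the second quadrant), and let Q = [x₁, x₂] × [y₁, y₂] with x₁ ≤ x₂ and y₁ ≤ y₂. Then ρ intersects Q if and only if (i) the corners q₁ = (x₁, y₁) and q₃ = (x₂, y₂) lie on opposite closed sides of the supporting line of ρ, i.e., ((q₁ − p) × d) · ((q₃ − p) × d) ≤ 0 (where (u₁,u₂) × (v₁,v₂) = u₁v₂ − u₂v₁), and (ii) the apex lies right of and below the corner q₄ = (x₁, y₂), i.e., p₁ ≥ x₁ and p₂ ≤ y₂. -/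
/-!
Along the ray each coordinate is an affine function of the parameter `t`, so the parameters of
the points of the ray in `Q` form the intersection of `[0, ∞)` with two closed intervals, one cut
out by `[x₁, x₂]` and one by `[y₁, y₂]`. Such an intersection is nonempty iff every lower end is
below every upper end. Two of these comparisons are `x₁ ≤ x₂` and `y₁ ≤ y₂`, two say that the
apex lies right of and below `q₄`, and the two comparisons across the intervals are the signs of
the cross products `(q₁ − p) × d ≤ 0 ≤ (q₃ − p) × d`. Since `q ↦ (q − p) × d` is monotone in both
coordinates when `d₁ < 0 < d₂`, this pair of signs is equivalent to their product being `≤ 0`.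
-/

open Set

section LinearOrderedField

variable {K : Type*} [Field K] [LinearOrder K] [IsStrictOrderedRing K]

theorem preimage_const_add_mul_Icc_of_pos {p d : K} (hd : 0 < d) (a b : K) :
    (fun t => p + t * d) ⁻¹' Icc a b = Icc ((a - p) / d) ((b - p) / d) := by
  change (fun t => t * d) ⁻¹' ((fun x => p + x) ⁻¹' Icc a b) = _
  rw [preimage_const_add_Icc, preimage_mul_const_Icc₀ _ _ hd]

theorem preimage_const_add_mul_Icc_of_neg {p d : K} (hd : d < 0) (a b : K) :
    (fun t => p + t * d) ⁻¹' Icc a b = Icc ((b - p) / d) ((a - p) / d) := by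
  change (fun t => t * d) ⁻¹' ((fun x => p + x) ⁻¹' Icc a b) = _
  rw [preimage_const_add_Icc, preimage_mul_const_Icc_of_neg _ _ hd]

theorem div_le_div_iff_of_neg_of_pos {a b c d : K} (hc : c < 0) (hd : 0 < d) :
    a / c ≤ b / d ↔ 0 ≤ a * d - b * c := by
  rw [← neg_div_neg_eq a c, div_le_div_iff₀ (neg_pos.2 hc) hd]
  constructor <;> intro h <;> linarith

theorem div_le_div_iff_of_pos_of_neg {a b c d : K} (hc : 0 < c) (hd : d < 0) :
    a / c ≤ b / d ↔ b * c - a * d ≤ 0 := by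
  rw [← neg_div_neg_eq b d, div_le_div_iff₀ hc (neg_pos.2 hd)]
  constructor <;> intro h <;> linarith

theorem mul_nonpos_iff_of_le_s11 {a b : K} (hab : a ≤ b) : a * b ≤ 0 ↔ a ≤ 0 ∧ 0 ≤ b := by
  refine ⟨fun h => ?_, fun ⟨ha, hb⟩ => mul_nonpos_of_nonpos_of_nonneg ha hb⟩
  rcases mul_nonpos_iff.1 h with ⟨ha, hb⟩ | hab'
  · exact ⟨hab.trans hb, ha.trans hab⟩
  · exact hab'

end LinearOrderedField

theorem ray_inter_prod_nonempty_iff {R : Type*} [Zero R] [Add R] [Mul R] [Preorder R]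
    (p₁ p₂ d₁ d₂ : R) (s u : Set R) :
    ({q : R × R | ∃ t : R, 0 ≤ t ∧ q = (p₁ + t * d₁, p₂ + t * d₂)} ∩ s ×ˢ u).Nonempty ↔
      (Ici 0 ∩ (fun t => p₁ + t * d₁) ⁻¹' s ∩ (fun t => p₂ + t * d₂) ⁻¹' u).Nonempty := by
  constructor
  · rintro ⟨_, ⟨t, ht, rfl⟩, hs, hu⟩
    exact ⟨t, ⟨ht, hs⟩, hu⟩
  · rintro ⟨t, ⟨ht, hs⟩, hu⟩
    exact ⟨_, ⟨t, ht, rfl⟩, hs, hu⟩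

theorem Ici_inter_Icc_inter_Icc_nonempty_iff {α : Type*} [LinearOrder α] {z a b c e : α} :
    (Ici z ∩ Icc a b ∩ Icc c e).Nonempty ↔
      z ≤ b ∧ z ≤ e ∧ a ≤ b ∧ a ≤ e ∧ c ≤ b ∧ c ≤ e := by
  constructor
  · rintro ⟨t, ⟨hz, ha, hb⟩, hc, he⟩
    exact ⟨hz.trans hb, hz.trans he, ha.trans hb, ha.trans he, hc.trans hb, hc.trans he⟩
  · rintro ⟨hzb, hze, hab, hae, hcb, hce⟩
    refine ⟨max z (max a c), ⟨le_max_left _ _, ?_, ?_⟩, ?_, ?_⟩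
    · exact le_max_of_le_right (le_max_left _ _)
    · exact max_le hzb (max_le hab hcb)
    · exact le_max_of_le_right (le_max_right _ _)
    · exact max_le hze (max_le hae hce)

/-- A ray with apex `p = (p₁,p₂)` and direction `d = (d₁,d₂)`, `d₁ < 0 < d₂`
(second quadrant), intersects the axis-parallel rectangle `Q = [x₁,x₂] × [y₁,y₂]` iff
(i) the corners `q₁ = (x₁,y₁)` and `q₃ = (x₂,y₂)` lie on opposite closed sides of the
supporting line of the ray, i.e. `((q₁ − p) × d) · ((q₃ − p) × d) ≤ 0` where
`(u₁,u₂) × (v₁,v₂) = u₁v₂ − u₂v₁`, and (ii) the apex lies right of and below the corner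
`q₄ = (x₁,y₂)`. -/
theorem stmt_11 (p₁ p₂ d₁ d₂ x₁ x₂ y₁ y₂ : ℝ) (hd₁ : d₁ < 0) (hd₂ : 0 < d₂)
    (hx : x₁ ≤ x₂) (hy : y₁ ≤ y₂) :
    ({q : ℝ × ℝ | ∃ t : ℝ, 0 ≤ t ∧ q = (p₁ + t * d₁, p₂ + t * d₂)} ∩
        Set.Icc x₁ x₂ ×ˢ Set.Icc y₁ y₂).Nonempty ↔
      ((x₁ - p₁) * d₂ - (y₁ - p₂) * d₁) * ((x₂ - p₁) * d₂ - (y₂ - p₂) * d₁) ≤ 0 ∧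
        x₁ ≤ p₁ ∧ p₂ ≤ y₂ := by
  have cross_mono :
      (x₁ - p₁) * d₂ - (y₁ - p₂) * d₁ ≤ (x₂ - p₁) * d₂ - (y₂ - p₂) * d₁ := by
    linarith [mul_le_mul_of_nonneg_right hx hd₂.le, mul_le_mul_of_nonpos_right hy hd₁.le]
  have hx' : (x₂ - p₁) / d₁ ≤ (x₁ - p₁) / d₁ :=
    div_le_div_of_nonpos_of_le hd₁.le (by linarith)
  have hy' : (y₁ - p₂) / d₂ ≤ (y₂ - p₂) / d₂ := by gcongr
  rw [ray_inter_prod_nonempty_iff, preimage_const_add_mul_Icc_of_neg hd₁,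
    preimage_const_add_mul_Icc_of_pos hd₂, Ici_inter_Icc_inter_Icc_nonempty_iff,
    mul_nonpos_iff_of_le_s11 cross_mono, div_le_div_iff_of_neg_of_pos hd₁ hd₂,
    div_le_div_iff_of_pos_of_neg hd₂ hd₁, le_div_iff_of_neg hd₁, le_div_iff₀ hd₂]
  simp only [hx', hy', zero_mul, sub_nonpos, sub_nonneg, true_and, and_true]
  tauto
end

section
/- Let γ : [0,1] → ℝ² be a closed curve (γ(0) = γ(1)) of finite length L. Then there exists a rectangle Q containing the image of γ with perimeter per(Q) ≤ (4/π) · L. -/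
/-!
Rotate the curve by `θ` and let `w(θ)`, `h(θ)` be the side lengths of its axis-parallel bounding
box. Since the curve is closed, each rotated coordinate runs twice between its extreme values, so
the `ℓ¹` length (in the rotated frame) of any inscribed polygon through the extremal parameters is
at least `2 (w(θ) + h(θ))`. On the other hand `∫₀^{2π} |cos (θ + c)| dθ = 4`, so the `ℓ¹` length of
a fixed inscribed polygon, averaged over `θ ∈ [0, 2π]`, is `4/π` times its Euclidean length, hence
at most `(4/π) L`. If every rectangle were too large, compactness of `[0, 2π]` together with the
monotonicity of polygon lengths under refinement would produce a single polygon whose `ℓ¹` length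
exceeds `(4/π) L` in every direction, contradicting the average.
-/

open Set Real Complex intervalIntegral
open scoped List

section Chain

variable {α E : Type*} [PseudoMetricSpace E] (f : α → E)

noncomputable def chainLength : List α → ℝ
  | a :: b :: l => dist (f a) (f b) + chainLength (b :: l)
  | _ => 0

@[simp] lemma chainLength_nil : chainLength f [] = 0 := rfl

@[simp] lemma chainLength_singleton (a : α) : chainLength f [a] = 0 := rfl

@[simp] lemma chainLength_cons_cons (a b : α) (l : List α) :
    chainLength f (a :: b :: l) = dist (f a) (f b) + chainLength f (b :: l) := rfl

lemma chainLength_nonneg : ∀ l : List α, 0 ≤ chainLength f l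
  | [] | [_] => le_rfl
  | _ :: b :: l => add_nonneg dist_nonneg (chainLength_nonneg (b :: l))

lemma chainLength_le_cons (a : α) : ∀ l : List α, chainLength f l ≤ chainLength f (a :: l)
  | [] => le_rfl
  | _ :: _ => le_add_of_nonneg_left dist_nonneg

lemma chainLength_cons_le_cons_cons (a b : α) :
    ∀ l : List α, chainLength f (a :: l) ≤ chainLength f (a :: b :: l)
  | [] => by simp
  | c :: l => by
    simp only [chainLength_cons_cons]
    linarith [dist_triangle (f a) (f b) (f c)]

lemma chainLength_le_of_sublist {l₁ l₂ : List α} (h : l₁ <+ l₂) :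
    chainLength f l₁ ≤ chainLength f l₂ ∧
      ∀ a, chainLength f (a :: l₁) ≤ chainLength f (a :: l₂) := by
  induction h with
  | slnil => simp
  | cons b _ ih =>
    exact ⟨ih.1.trans (chainLength_le_cons f b _),
      fun a => (ih.2 a).trans (chainLength_cons_le_cons_cons f a b _)⟩
  | cons_cons b _ ih =>
    refine ⟨ih.2 b, fun a => ?_⟩
    simpa only [chainLength_cons_cons, add_le_add_iff_left] using ih.2 b

lemma List.Sublist.chainLength_le {l₁ l₂ : List α} (h : l₁ <+ l₂) :
    chainLength f l₁ ≤ chainLength f l₂ :=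
  (chainLength_le_of_sublist f h).1

lemma pair_sublist_or_pair_sublist {x y : α} {l : List α} (hx : x ∈ l) (hy : y ∈ l) :
    [x, y] <+ l ∨ [y, x] <+ l ∨ x = y := by
  obtain ⟨s, t, rfl⟩ := List.append_of_mem hx
  rcases List.mem_append.mp hy with hy | hy
  · exact Or.inr <| Or.inl <| (List.singleton_sublist.mpr hy).append (by simp)
  · rcases List.mem_cons.mp hy with rfl | hy
    · exact Or.inr <| Or.inr rfl
    · exact Or.inl <| (List.cons_sublist_cons.mpr (List.singleton_sublist.mpr hy)).trans
        (List.sublist_append_right s _)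

/-- On a closed polygon, every pair of vertices is joined by two disjoint arcs. -/
lemma two_mul_dist_le_chainLength {a b x y : α} {l : List α} (hab : f a = f b)
    (hx : x ∈ l) (hy : y ∈ l) : 2 * dist (f x) (f y) ≤ chainLength f (a :: l ++ [b]) := by
  have key : ∀ {u v}, [u, v] <+ l → 2 * dist (f u) (f v) ≤ chainLength f (a :: l ++ [b]) := by
    intro u v huv
    have hsub : a :: [u, v] ++ [b] <+ a :: l ++ [b] := (huv.cons_cons a).append_right [b]
    refine le_trans ?_ (List.Sublist.chainLength_le f hsub)
    simp only [List.cons_append, List.nil_append, chainLength_cons_cons, chainLength_singleton,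
      hab]
    linarith [dist_triangle (f v) (f b) (f u), dist_comm (f b) (f u), dist_comm (f u) (f v)]
  rcases pair_sublist_or_pair_sublist hx hy with h | h | rfl
  · exact key h
  · rw [dist_comm]; exact key h
  · simpa using chainLength_nonneg f _

lemma ofReal_chainLength_le_eVariationOn [LinearOrder α] {s : Set α} :
    ∀ {a : α} {l : List α}, (a :: l).Pairwise (· ≤ ·) → (∀ t ∈ a :: l, t ∈ s) →
      ENNReal.ofReal (chainLength f (a :: l)) ≤ eVariationOn f (s ∩ Ici a)
  | a, [], _, _ => by simp
  | a, b :: l, hsort, hs => by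
    have hab : a ≤ b := List.rel_of_pairwise_cons hsort List.mem_cons_self
    have ih := ofReal_chainLength_le_eVariationOn hsort.of_cons
      fun t ht => hs t (List.mem_cons_of_mem a ht)
    rw [chainLength_cons_cons, ENNReal.ofReal_add dist_nonneg (chainLength_nonneg f _),
      ← edist_dist]
    calc edist (f a) (f b) + ENNReal.ofReal (chainLength f (b :: l))
        ≤ eVariationOn f (s ∩ Icc a b) + eVariationOn f (s ∩ Ici b) :=
          add_le_add (eVariationOn.edist_le f ⟨hs a (by simp), le_rfl, hab⟩
            ⟨hs b (by simp), hab, le_rfl⟩) ih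
      _ ≤ eVariationOn f ((s ∩ Icc a b) ∪ (s ∩ Ici b)) :=
          eVariationOn.add_le_union f fun x hx y hy => hx.2.2.trans hy.2
      _ ≤ eVariationOn f (s ∩ Ici a) := eVariationOn.mono f <|
          union_subset (inter_subset_inter_right s Icc_subset_Ici_self)
            (inter_subset_inter_right s (Ici_subset_Ici.mpr hab))

lemma chainLength_le_toReal_eVariationOn [LinearOrder α] {s : Set α}
    (hfin : eVariationOn f s ≠ ⊤) {l : List α} (hsort : l.Pairwise (· ≤ ·))
    (hs : ∀ t ∈ l, t ∈ s) : chainLength f l ≤ (eVariationOn f s).toReal := by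
  cases l with
  | nil => exact ENNReal.toReal_nonneg
  | cons a l =>
    rw [← ENNReal.ofReal_le_iff_le_toReal hfin]
    exact (ofReal_chainLength_le_eVariationOn f hsort hs).trans
      (eVariationOn.mono f inter_subset_left)

end Chain

lemma continuous_chainLength {X α E : Type*} [TopologicalSpace X] [PseudoMetricSpace E]
    {f : X → α → E} (hf : ∀ a, Continuous fun x => f x a) :
    ∀ l : List α, Continuous fun x => chainLength (f x) l
  | [] | [_] => continuous_const
  | a :: b :: l => by
    simp only [chainLength_cons_cons]
    exact ((hf a).dist (hf b)).add (continuous_chainLength hf (b :: l))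

lemma integral_chainLength {α E F : Type*} [PseudoMetricSpace E] [PseudoMetricSpace F]
    {f : ℝ → α → E} {g : α → F} {u v c : ℝ} (hf : ∀ a, Continuous fun x => f x a)
    (hfg : ∀ a b, ∫ x in u..v, dist (f x a) (f x b) = c * dist (g a) (g b)) :
    ∀ l : List α, ∫ x in u..v, chainLength (f x) l = c * chainLength g l
  | [] | [_] => by simp
  | a :: b :: l => by
    simp only [chainLength_cons_cons]
    rw [integral_add (((hf a).dist (hf b)).intervalIntegrable _ _)
      ((continuous_chainLength hf _).intervalIntegrable _ _), hfg, integral_chainLength hf hfg,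
      mul_add]

lemma integral_abs_cos_add (c : ℝ) : ∫ θ in (0)..(2 * π), |Real.cos (θ + c)| = 4 := by
  have hper : Function.Periodic (fun x => |Real.cos x|) π := fun x => by simp [Real.cos_add_pi]
  have hint : ∀ a b, IntervalIntegrable (fun x => |Real.cos x|) MeasureTheory.volume a b :=
    fun _ _ => Real.continuous_cos.abs.intervalIntegrable _ _
  have half_period : ∫ x in (-(π / 2))..(-(π / 2) + π), |Real.cos x| = 2 := by
    rw [show -(π / 2) + π = π / 2 by ring,
      integral_congr fun x hx => abs_of_nonneg (Real.cos_nonneg_of_mem_Icc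
        (by rwa [Set.uIcc_of_le (by linarith [pi_pos])] at hx))]
    norm_num
  rw [integral_comp_add_right (fun x => |Real.cos x|), zero_add,
    show 2 * π + c = c + (2 : ℤ) • π by ring,
    hper.intervalIntegral_add_zsmul_eq 2 c hint, hper.intervalIntegral_add_eq c (-(π / 2)),
    half_period]
  norm_num

lemma re_exp_mul_I_mul (θ : ℝ) (v : ℂ) : (exp (θ * I) * v).re = ‖v‖ * Real.cos (θ + arg v) := by
  conv_lhs => rw [← norm_mul_exp_arg_mul_I v]
  rw [mul_left_comm, ← Complex.exp_add, ← add_mul, ← ofReal_add, re_ofReal_mul,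
    exp_ofReal_mul_I_re]

lemma im_exp_mul_I_mul (θ : ℝ) (v : ℂ) : (exp (θ * I) * v).im = ‖v‖ * Real.sin (θ + arg v) := by
  conv_lhs => rw [← norm_mul_exp_arg_mul_I v]
  rw [mul_left_comm, ← Complex.exp_add, ← add_mul, ← ofReal_add, im_ofReal_mul,
    exp_ofReal_mul_I_im]

lemma integral_abs_re_exp_mul_I_mul (v : ℂ) :
    ∫ θ in (0)..(2 * π), |(exp (θ * I) * v).re| = 4 * ‖v‖ := by
  simp_rw [re_exp_mul_I_mul, abs_mul, abs_norm]
  rw [integral_const_mul, integral_abs_cos_add, mul_comm]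

lemma integral_abs_im_exp_mul_I_mul (v : ℂ) :
    ∫ θ in (0)..(2 * π), |(exp (θ * I) * v).im| = 4 * ‖v‖ := by
  simp_rw [im_exp_mul_I_mul, abs_mul, abs_norm, ← Real.cos_sub_pi_div_two, add_sub_assoc]
  rw [integral_const_mul, integral_abs_cos_add, mul_comm]

lemma Finset.sort_sublist_sort {α : Type*} [LinearOrder α] {s t : Finset α} (h : s ⊆ t) :
    s.sort <+ t.sort :=
  List.sublist_of_subperm_of_pairwise
    ((Finset.sort_nodup s _).subperm fun _ hx =>
      (Finset.mem_sort _).mpr (h ((Finset.mem_sort _).mp hx)))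
    (Finset.pairwise_sort s _) (Finset.pairwise_sort t _)

section Frame

variable {α : Type*} [LinearOrder α] {a b : α} {s : Finset α}

lemma Finset.pairwise_cons_sort_append (hab : a ≤ b) (hs : ∀ t ∈ s, t ∈ Set.Icc a b) :
    (a :: s.sort ++ [b]).Pairwise (· ≤ ·) := by
  simp only [List.cons_append, List.pairwise_cons, List.mem_append, List.mem_singleton,
    List.pairwise_append, Finset.mem_sort, Finset.pairwise_sort]
  refine ⟨?_, trivial, by simp, fun t ht _ hu => hu ▸ (hs t ht).2⟩
  rintro t (ht | rfl)
  exacts [(hs t ht).1, hab]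

lemma Finset.mem_Icc_of_mem_cons_sort_append (hab : a ≤ b) (hs : ∀ t ∈ s, t ∈ Set.Icc a b)
    {t : α} (ht : t ∈ a :: s.sort ++ [b]) : t ∈ Set.Icc a b := by
  simp only [List.mem_append, List.mem_cons, Finset.mem_sort, List.not_mem_nil, or_false] at ht
  rcases ht with (rfl | ht) | rfl
  exacts [Set.left_mem_Icc.mpr hab, hs t ht, Set.right_mem_Icc.mpr hab]

end Frame

lemma IsCompact.exists_forall_mem_Icc {X : Type*} [TopologicalSpace X] {s : Set X}
    (hs : IsCompact s) (hne : s.Nonempty) {g : X → ℝ} (hg : ContinuousOn g s) :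
    ∃ a ∈ s, ∃ b ∈ s, ∀ t ∈ s, g t ∈ Icc (g a) (g b) := by
  obtain ⟨a, ha, hmin⟩ := hs.exists_isMinOn hne hg
  obtain ⟨b, hb, hmax⟩ := hs.exists_isMaxOn hne hg
  exact ⟨a, ha, b, hb, fun t ht => ⟨hmin ht, hmax ht⟩⟩

section Taxicab

variable {α : Type*} (z : α → ℂ)

noncomputable def taxicabChainLength (θ : ℝ) (l : List α) : ℝ :=
  chainLength (fun t => (exp (θ * I) * z t).re) l + chainLength (fun t => (exp (θ * I) * z t).im) l

lemma continuous_taxicabChainLength (l : List α) :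
    Continuous fun θ => taxicabChainLength z θ l :=
  (continuous_chainLength (fun _ => by fun_prop) l).add
    (continuous_chainLength (fun _ => by fun_prop) l)

lemma integral_taxicabChainLength (l : List α) :
    ∫ θ in (0)..(2 * π), taxicabChainLength z θ l = 8 * chainLength z l := by
  have hre : ∀ a b, ∫ θ in (0)..(2 * π), dist (exp (θ * I) * z a).re (exp (θ * I) * z b).re
      = 4 * dist (z a) (z b) := fun a b => by
    simp_rw [Real.dist_eq, ← sub_re, ← mul_sub, dist_eq_norm]
    exact integral_abs_re_exp_mul_I_mul _
  have him : ∀ a b, ∫ θ in (0)..(2 * π), dist (exp (θ * I) * z a).im (exp (θ * I) * z b).im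
      = 4 * dist (z a) (z b) := fun a b => by
    simp_rw [Real.dist_eq, ← sub_im, ← mul_sub, dist_eq_norm]
    exact integral_abs_im_exp_mul_I_mul _
  unfold taxicabChainLength
  rw [integral_add ((continuous_chainLength (fun _ => by fun_prop) l).intervalIntegrable _ _)
      ((continuous_chainLength (fun _ => by fun_prop) l).intervalIntegrable _ _),
    integral_chainLength (fun _ => by fun_prop) hre,
    integral_chainLength (fun _ => by fun_prop) him]
  ring

lemma List.Sublist.taxicabChainLength_le {l₁ l₂ : List α} (h : l₁ <+ l₂) (θ : ℝ) :
    taxicabChainLength z θ l₁ ≤ taxicabChainLength z θ l₂ :=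
  add_le_add (h.chainLength_le _) (h.chainLength_le _)

lemma two_mul_width_le_taxicabChainLength {a b : α} (hab : z a = z b) (θ : ℝ) {l : List α}
    {t₁ t₂ t₃ t₄ : α} (h₁ : t₁ ∈ l) (h₂ : t₂ ∈ l) (h₃ : t₃ ∈ l) (h₄ : t₄ ∈ l) :
    2 * ((exp (θ * I) * z t₂).re - (exp (θ * I) * z t₁).re
      + ((exp (θ * I) * z t₄).im - (exp (θ * I) * z t₃).im))
      ≤ taxicabChainLength z θ (a :: l ++ [b]) := by
  have hre := two_mul_dist_le_chainLength (fun t => (exp (θ * I) * z t).re) (a := a) (b := b)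
    (by rw [hab]) h₂ h₁
  have him := two_mul_dist_le_chainLength (fun t => (exp (θ * I) * z t).im) (a := a) (b := b)
    (by rw [hab]) h₄ h₃
  simp only [Real.dist_eq] at hre him
  unfold taxicabChainLength
  linarith [le_abs_self ((exp (θ * I) * z t₂).re - (exp (θ * I) * z t₁).re),
    le_abs_self ((exp (θ * I) * z t₄).im - (exp (θ * I) * z t₃).im)]

lemma exists_bbox_perimeter_le_taxicabChainLength {z : ℝ → ℂ} (hz : ContinuousOn z (Icc 0 1))
    (hclosed : z 0 = z 1) (θ : ℝ) :
    ∃ x₁ x₂ y₁ y₂ : ℝ, (∀ t ∈ Icc (0 : ℝ) 1,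
        (exp (θ * I) * z t).re ∈ Icc x₁ x₂ ∧ (exp (θ * I) * z t).im ∈ Icc y₁ y₂) ∧
      ∃ T : Finset ℝ, (∀ t ∈ T, t ∈ Icc (0 : ℝ) 1) ∧
        2 * ((x₂ - x₁) + (y₂ - y₁)) ≤ taxicabChainLength z θ (0 :: T.sort ++ [1]) := by
  have hcont : ∀ g : ℂ → ℝ, Continuous g →
      ContinuousOn (fun t => g (exp (θ * I) * z t)) (Icc 0 1) :=
    fun g hg => hg.comp_continuousOn ((continuous_const.mul continuous_id).comp_continuousOn hz)
  obtain ⟨a, ha, b, hb, hre⟩ := isCompact_Icc.exists_forall_mem_Icc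
    (nonempty_Icc.mpr zero_le_one) (hcont _ continuous_re)
  obtain ⟨c, hc, d, hd, him⟩ := isCompact_Icc.exists_forall_mem_Icc
    (nonempty_Icc.mpr zero_le_one) (hcont _ continuous_im)
  refine ⟨_, _, _, _, fun t ht => ⟨hre t ht, him t ht⟩, {a, b, c, d}, ?_,
    two_mul_width_le_taxicabChainLength z hclosed θ (by simp) (by simp) (by simp) (by simp)⟩
  simp only [Finset.mem_insert, Finset.mem_singleton]
  rintro t (rfl | rfl | rfl | rfl) <;> assumption

/-- Since refining a partition only increases `taxicabChainLength`, the open sets of directions in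
which a partition beats `c` form a directed cover of the compact set `K`. -/
lemma exists_forall_lt_taxicabChainLength {z : α → ℂ} {K : Set ℝ} (hK : IsCompact K)
    [LinearOrder α] {s : Set α} {a b : α} {c : ℝ}
    (h : ∀ θ ∈ K, ∃ T : Finset α, (∀ t ∈ T, t ∈ s) ∧
      c < taxicabChainLength z θ (a :: T.sort ++ [b])) :
    ∃ T : Finset α, (∀ t ∈ T, t ∈ s) ∧
      ∀ θ ∈ K, c < taxicabChainLength z θ (a :: T.sort ++ [b]) := by
  let U (T : {T : Finset α // ∀ t ∈ T, t ∈ s}) : Set ℝ :=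
    {θ | c < taxicabChainLength z θ (a :: T.1.sort ++ [b])}
  have hmono : ∀ {T₁ T₂ : Finset α}, T₁ ⊆ T₂ → ∀ θ,
      taxicabChainLength z θ (a :: T₁.sort ++ [b]) ≤ taxicabChainLength z θ (a :: T₂.sort ++ [b]) :=
    fun hT => (((Finset.sort_sublist_sort hT).cons_cons a).append_right [b]).taxicabChainLength_le z
  have : Nonempty {T : Finset α // ∀ t ∈ T, t ∈ s} := ⟨⟨∅, by simp⟩⟩
  obtain ⟨T, hT⟩ := hK.elim_directed_cover U
    (fun T => isOpen_lt continuous_const (continuous_taxicabChainLength z _))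
    (fun θ hθ => by obtain ⟨T, hTs, hlt⟩ := h θ hθ; exact mem_iUnion.mpr ⟨⟨T, hTs⟩, hlt⟩)
    fun T₁ T₂ => ⟨⟨T₁.1 ∪ T₂.1, fun t ht => (Finset.mem_union.mp ht).elim (T₁.2 t) (T₂.2 t)⟩,
      fun θ hθ => hθ.trans_le (hmono Finset.subset_union_left θ),
      fun θ hθ => hθ.trans_le (hmono Finset.subset_union_right θ)⟩
  exact ⟨T.1, T.2, fun θ hθ => hT hθ⟩

end Taxicab

theorem exists_rotated_bbox_perimeter_le {z : ℝ → ℂ} (hz : ContinuousOn z (Icc 0 1))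
    (hclosed : z 0 = z 1) (hfin : eVariationOn z (Icc 0 1) ≠ ⊤) :
    ∃ θ x₁ x₂ y₁ y₂ : ℝ, (∀ t ∈ Icc (0 : ℝ) 1,
        (exp (θ * I) * z t).re ∈ Icc x₁ x₂ ∧ (exp (θ * I) * z t).im ∈ Icc y₁ y₂) ∧
      2 * ((x₂ - x₁) + (y₂ - y₁)) ≤ 4 / π * (eVariationOn z (Icc 0 1)).toReal := by
  set L := (eVariationOn z (Icc 0 1)).toReal
  by_contra! H
  obtain ⟨T, hT, hlarge⟩ := exists_forall_lt_taxicabChainLength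
    (isCompact_Icc (a := 0) (b := 2 * π)) (c := 4 / π * L) fun θ _ => by
      obtain ⟨x₁, x₂, y₁, y₂, hbox, T, hT, hle⟩ :=
        exists_bbox_perimeter_le_taxicabChainLength hz hclosed θ
      exact ⟨T, hT, (H θ x₁ x₂ y₁ y₂ hbox).trans_le hle⟩
  have hpoly : chainLength z (0 :: T.sort ++ [1]) ≤ L :=
    chainLength_le_toReal_eVariationOn z hfin (Finset.pairwise_cons_sort_append zero_le_one hT)
      fun _ => Finset.mem_Icc_of_mem_cons_sort_append zero_le_one hT
  have hlt : ∫ _ in (0)..(2 * π), 4 / π * L <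
      ∫ θ in (0)..(2 * π), taxicabChainLength z θ (0 :: T.sort ++ [1]) :=
    integral_lt_integral_of_continuousOn_of_le_of_exists_lt (by positivity) continuousOn_const
      (continuous_taxicabChainLength z _).continuousOn
      (fun θ hθ => (hlarge θ (Ioc_subset_Icc_self hθ)).le)
      ⟨0, left_mem_Icc.mpr (by positivity), hlarge 0 (left_mem_Icc.mpr (by positivity))⟩
  rw [integral_const, integral_taxicabChainLength, smul_eq_mul, sub_zero] at hlt
  field_simp at hlt
  nlinarith [pi_pos]

lemma Isometry.eVariationOn_comp {α E F : Type*} [LinearOrder α] [PseudoEMetricSpace E]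
    [PseudoEMetricSpace F] {g : E → F} (hg : Isometry g) (f : α → E) (s : Set α) :
    eVariationOn (g ∘ f) s = eVariationOn f s := by
  simp only [eVariationOn, Function.comp_apply, hg.edist_eq]

lemma exists_isometry_image_box_of_rotated_bbox {S : Set (EuclideanSpace ℝ (Fin 2))}
    {θ x₁ x₂ y₁ y₂ : ℝ} (hS : ∀ p ∈ S,
      (exp (θ * I) * orthonormalBasisOneI.repr.symm p).re ∈ Icc x₁ x₂ ∧
      (exp (θ * I) * orthonormalBasisOneI.repr.symm p).im ∈ Icc y₁ y₂) :
    ∃ f : EuclideanSpace ℝ (Fin 2) → EuclideanSpace ℝ (Fin 2), Isometry f ∧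
      S ⊆ f '' {p | p 0 ∈ Icc 0 (x₂ - x₁) ∧ p 1 ∈ Icc 0 (y₂ - y₁)} := by
  set e := orthonormalBasisOneI.repr
  set c : ℂ := x₁ + y₁ * I
  refine ⟨e ∘ rotation (Circle.exp (-θ)) ∘ IsometryEquiv.addRight c ∘ e.symm,
    e.isometry.comp ((rotation _).isometry.comp ((IsometryEquiv.addRight c).isometry.comp
      e.symm.isometry)), fun q hq => ⟨e (exp (θ * I) * e.symm q - c), ?_, ?_⟩⟩
  · obtain ⟨⟨hre₁, hre₂⟩, him₁, him₂⟩ := hS q hq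
    have hc : c.re = x₁ ∧ c.im = y₁ := by simp [c]
    change (exp (θ * I) * e.symm q - c).re ∈ Icc 0 (x₂ - x₁) ∧
      (exp (θ * I) * e.symm q - c).im ∈ Icc 0 (y₂ - y₁)
    simp only [sub_re, sub_im, hc, mem_Icc]
    refine ⟨⟨?_, ?_⟩, ?_, ?_⟩ <;> linarith
  · simp only [Function.comp_apply, IsometryEquiv.addRight_apply, rotation_apply, Circle.coe_exp,
      LinearIsometryEquiv.symm_apply_apply, sub_add_cancel, ← mul_assoc, ← Complex.exp_add]
    simp

/-- Any closed curve `γ : [0,1] → ℝ²` (with `γ(0) = γ(1)`) of finite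
length `L` can be enclosed in a rectangle `Q` of perimeter `per(Q) = 2(w + h) ≤ (4/π) · L`. -/
theorem stmt_12 (γ : ℝ → EuclideanSpace ℝ (Fin 2)) (L : ℝ)
    (hcont : ContinuousOn γ (Set.Icc 0 1))
    (hclosed : γ 0 = γ 1)
    (hfin : eVariationOn γ (Set.Icc 0 1) ≠ ⊤)
    (hL : L = (eVariationOn γ (Set.Icc 0 1)).toReal) :
    ∃ (w h : ℝ) (Q : Set (EuclideanSpace ℝ (Fin 2)))
      (f : EuclideanSpace ℝ (Fin 2) → EuclideanSpace ℝ (Fin 2)),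
      0 ≤ w ∧ 0 ≤ h ∧ Isometry f ∧
      Q = f '' {p : EuclideanSpace ℝ (Fin 2) | p 0 ∈ Set.Icc 0 w ∧ p 1 ∈ Set.Icc 0 h} ∧
      γ '' Set.Icc 0 1 ⊆ Q ∧
      2 * (w + h) ≤ (4 / Real.pi) * L := by
  set e := orthonormalBasisOneI.repr
  have hvar : eVariationOn (e.symm ∘ γ) (Icc 0 1) = eVariationOn γ (Icc 0 1) :=
    e.symm.isometry.eVariationOn_comp γ _
  obtain ⟨θ, x₁, x₂, y₁, y₂, hbox, hper⟩ := exists_rotated_bbox_perimeter_le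
    (z := e.symm ∘ γ) (e.symm.continuous.comp_continuousOn hcont) (by simp [hclosed]) (hvar ▸ hfin)
  obtain ⟨f, hf, hsub⟩ := exists_isometry_image_box_of_rotated_bbox (S := γ '' Icc 0 1)
    (by rintro _ ⟨t, ht, rfl⟩; exact hbox t ht)
  obtain ⟨⟨hx₁, hx₂⟩, hy₁, hy₂⟩ := hbox 0 (left_mem_Icc.mpr zero_le_one)
  exact ⟨x₂ - x₁, y₂ - y₁, _, f, by linarith, by linarith, hf, rfl, hsub, hL ▸ hvar ▸ hper⟩
end

section
/- Let 𝓛 be a set of lines in ℝ² and let γ : [0,1] → ℝ² be a closed curve (γ(0) = γ(1)) of finite length L such that every line in 𝓛 intersects the image of γ. Then there exists a rectangle Q with per(Q) ≤ (4/π) · L such that every line in 𝓛 intersects the boundary of Q; in particular, the boundary of Q is a closed tour of length at most (4/π) · L visiting every line in 𝓛. -/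
/-!
Let `W θ` be the width of the curve in the direction `(cos θ, sin θ)`. The projection of the
closed curve onto that direction runs from its minimum to its maximum and back, so
`2 W θ` is at most the length of the projected curve; integrating over `θ ∈ [0, π]` with
`∫₀^π |⟪v, (cos θ, sin θ)⟫| dθ = 2 ‖v‖` (Cauchy–Crofton) gives `∫₀^π W ≤ L`. Hence some `θ`
has `W θ + W (θ + π / 2) ≤ 2 L / π`, and the bounding rectangle of the curve with sides in the
directions `θ` and `θ + π / 2` has perimeter at most `4 L / π`. A line meeting the curve meets
this rectangle, and a line meeting a rectangle meets its boundary.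
-/

open Set Real MeasureTheory

local notation "ℝ²" => EuclideanSpace ℝ (Fin 2)

lemma integral_abs_sin_add (c : ℝ) : ∫ θ in (0)..π, |sin (θ + c)| = 2 := by
  have hper : Function.Periodic (fun x => |sin x|) π := fun x => by simp [sin_add_pi]
  calc ∫ θ in (0)..π, |sin (θ + c)| = ∫ x in c..c + π, |sin x| := by
        simpa [add_comm c π] using
          intervalIntegral.integral_comp_add_right (a := 0) (b := π) (fun x => |sin x|) c
    _ = ∫ x in (0)..π, |sin x| := by simpa using hper.intervalIntegral_add_eq c 0
    _ = ∫ x in (0)..π, sin x := intervalIntegral.integral_congr fun x hx => by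
        rw [uIcc_of_le pi_pos.le] at hx
        exact abs_of_nonneg (sin_nonneg_of_nonneg_of_le_pi hx.1 hx.2)
    _ = 2 := by norm_num [integral_sin]

lemma norm_eq_sqrt_sq_add_sq (x : ℝ²) : ‖x‖ = √(x 0 ^ 2 + x 1 ^ 2) := by
  rw [← sqrt_sq (norm_nonneg x), EuclideanSpace.real_norm_sq_eq, Fin.sum_univ_two]

noncomputable def dirProj (θ : ℝ) : ℝ² →L[ℝ] ℝ :=
  cos θ • EuclideanSpace.proj 0 + sin θ • EuclideanSpace.proj 1

@[simp]
lemma dirProj_apply (θ : ℝ) (x : ℝ²) : dirProj θ x = x 0 * cos θ + x 1 * sin θ := by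
  simp [dirProj, mul_comm]

lemma dirProj_add_pi_div_two (θ : ℝ) (x : ℝ²) :
    dirProj (θ + π / 2) x = x 1 * cos θ - x 0 * sin θ := by
  simp only [dirProj_apply, cos_add_pi_div_two, sin_add_pi_div_two]
  ring

lemma continuous_dirProj : Continuous fun p : ℝ × ℝ² => dirProj p.1 p.2 := by
  simp only [dirProj_apply]; fun_prop

lemma abs_dirProj_le (θ : ℝ) (x : ℝ²) : |dirProj θ x| ≤ ‖x‖ := by
  rw [norm_eq_sqrt_sq_add_sq, dirProj_apply]
  exact abs_le_sqrt (by nlinarith [sin_sq_add_cos_sq θ, sq_nonneg (x 0 * sin θ - x 1 * cos θ)])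

lemma integral_abs_dirProj (x : ℝ²) : ∫ θ in (0)..π, |dirProj θ x| = 2 * ‖x‖ := by
  set z : ℂ := ⟨x 1, x 0⟩
  have hz : ‖z‖ = ‖x‖ := by
    rw [norm_eq_sqrt_sq_add_sq, Complex.norm_def, Complex.normSq_apply, add_comm]
    simp [z, sq]
  have hre : ‖z‖ * cos z.arg = x 1 := Complex.norm_mul_cos_arg z
  have him : ‖z‖ * sin z.arg = x 0 := Complex.norm_mul_sin_arg z
  have hphase : ∀ θ, dirProj θ x = ‖z‖ * sin (θ + z.arg) := fun θ => by
    rw [dirProj_apply, sin_add]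
    linear_combination (-sin θ) * hre - cos θ * him
  simp_rw [hphase, abs_mul, abs_norm, intervalIntegral.integral_const_mul, integral_abs_sin_add,
    hz, mul_comm]

lemma eq_zero_of_dirProj_eq_zero {θ : ℝ} {v : ℝ²} (h₁ : dirProj θ v = 0)
    (h₂ : dirProj (θ + π / 2) v = 0) : v = 0 := by
  rw [dirProj_apply] at h₁
  rw [dirProj_add_pi_div_two] at h₂
  have hv₀ : v 0 = 0 := by
    linear_combination cos θ * h₁ - sin θ * h₂ - v 0 * cos_sq_add_sin_sq θ
  have hv₁ : v 1 = 0 := by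
    linear_combination sin θ * h₁ + cos θ * h₂ - v 1 * cos_sq_add_sin_sq θ
  ext i
  fin_cases i <;> simpa

lemma two_mul_dist_le_sum_dist_of_closed {α : Type*} [PseudoMetricSpace α] (g : ℕ → α)
    {N i j : ℕ} (hg : g N = g 0) (hi : i ≤ N) (hj : j ≤ N) :
    2 * dist (g i) (g j) ≤ ∑ k ∈ Finset.range N, dist (g (k + 1)) (g k) := by
  wlog hij : i ≤ j generalizing i j
  · rw [dist_comm]; exact this hj hi (le_of_not_ge hij)
  have hsum : ∀ {m n}, m ≤ n → dist (g m) (g n) ≤ ∑ k ∈ Finset.Ico m n, dist (g (k + 1)) (g k) :=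
    fun h => (dist_le_Ico_sum_dist g h).trans_eq (by simp_rw [dist_comm])
  -- the way back from `g j` to `g i` passes through `g N = g 0`
  have hback : dist (g i) (g j) ≤ dist (g 0) (g i) + dist (g j) (g N) := by
    rw [hg, dist_comm (g 0)]; exact (dist_triangle _ _ _).trans_eq (by rw [dist_comm (g 0)])
  rw [Finset.range_eq_Ico, ← Finset.sum_Ico_consecutive _ (Nat.zero_le i) (hij.trans hj),
    ← Finset.sum_Ico_consecutive _ hij hj]
  linarith [hsum (Nat.zero_le i), hsum hij, hsum hj]

lemma sum_dist_le_toReal_eVariationOn {α E : Type*} [LinearOrder α] [PseudoMetricSpace E]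
    {f : α → E} {s : Set α} (hfin : eVariationOn f s ≠ ⊤) {N : ℕ} {u : ℕ → α}
    (hu : MonotoneOn u (Icc 0 N)) (us : ∀ i ∈ Icc 0 N, u i ∈ s) :
    ∑ i ∈ Finset.range N, dist (f (u (i + 1))) (f (u i)) ≤ (eVariationOn f s).toReal := by
  rw [← ENNReal.ofReal_le_iff_le_toReal hfin, ENNReal.ofReal_sum_of_nonneg fun _ _ => dist_nonneg,
    Finset.range_eq_Ico]
  simpa only [edist_dist] using eVariationOn.sum_le_of_monotoneOn_Icc (f := f) hu us

lemma exists_nat_forall_dist_le {α : Type*} [PseudoMetricSpace α] {γ : ℝ → α}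
    (hγ : ContinuousOn γ (Icc 0 1)) {ε : ℝ} (hε : 0 < ε) :
    ∃ N : ℕ, 0 < N ∧ ∀ s ∈ Icc (0 : ℝ) 1, ∃ k ≤ N, dist (γ s) (γ (k / N)) ≤ ε := by
  obtain ⟨δ, hδ, hγδ⟩ := Metric.uniformContinuousOn_iff_le.mp
    (isCompact_Icc.uniformContinuousOn_of_continuous hγ) ε hε
  obtain ⟨N, hN⟩ := exists_nat_gt (1 / δ)
  have hN0 : (0 : ℝ) < N := (one_div_pos.mpr hδ).trans hN
  refine ⟨N, by exact_mod_cast hN0, fun s hs => ?_⟩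
  set k := ⌊s * N⌋₊
  have hk : (k : ℝ) ≤ s * N := Nat.floor_le (mul_nonneg hs.1 hN0.le)
  have hk' : s * N < k + 1 := Nat.lt_floor_add_one _
  have hkN : (k : ℝ) / N ≤ s := by rw [div_le_iff₀ hN0]; exact hk
  have hsk : s < k / N + 1 / N := by rw [← add_div, lt_div_iff₀ hN0]; exact hk'
  have hNδ : 1 / (N : ℝ) < δ := (one_div_lt hδ hN0).mp hN
  refine ⟨k, Nat.floor_le_of_le (by nlinarith [hs.2]), hγδ s hs _ ⟨by positivity, ?_⟩ ?_⟩
  · exact hkN.trans hs.2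
  · rw [Real.dist_eq, abs_sub_le_iff]; constructor <;> linarith

noncomputable def width (K : Set ℝ²) (θ : ℝ) : ℝ :=
  sSup (dirProj θ '' K) - sInf (dirProj θ '' K)

section Width

variable {K : Set ℝ²}

lemma IsCompact.continuous_width (hK : IsCompact K) : Continuous (width K) :=
  (hK.continuous_sSup continuous_dirProj).sub (hK.continuous_sInf continuous_dirProj)

lemma IsCompact.dirProj_sub_sInf_mem_Icc (hK : IsCompact K) {x : ℝ²} (hx : x ∈ K) (θ : ℝ) :
    dirProj θ x - sInf (dirProj θ '' K) ∈ Icc 0 (width K θ) := by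
  have hbdd := (hK.image (dirProj θ).continuous).isBounded
  have hmem := mem_image_of_mem (dirProj θ) hx
  constructor
  · exact sub_nonneg.mpr (csInf_le hbdd.bddBelow hmem)
  · exact sub_le_sub_right (le_csSup hbdd.bddAbove hmem) _

lemma IsCompact.width_nonneg (hK : IsCompact K) (θ : ℝ) : 0 ≤ width K θ := by
  have hbdd := (hK.image (dirProj θ).continuous).isBounded
  exact sub_nonneg.mpr (Real.sInf_le_sSup _ hbdd.bddBelow hbdd.bddAbove)

lemma IsCompact.two_mul_width_le (hK : IsCompact K) (hKne : K.Nonempty) {q : ℕ → ℝ²} {N : ℕ}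
    (hq : q N = q 0) {ε : ℝ} (hnear : ∀ x ∈ K, ∃ k ≤ N, dist x (q k) ≤ ε) (θ : ℝ) :
    2 * width K θ ≤ ∑ k ∈ Finset.range N, |dirProj θ (q (k + 1) - q k)| + 4 * ε := by
  have hKθ := hK.image (dirProj θ).continuous
  obtain ⟨xmax, hxmax, hmax⟩ := hKθ.sSup_mem (hKne.image _)
  obtain ⟨xmin, hxmin, hmin⟩ := hKθ.sInf_mem (hKne.image _)
  obtain ⟨i, hi, hxi⟩ := hnear xmax hxmax
  obtain ⟨j, hj, hxj⟩ := hnear xmin hxmin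
  have hproj : ∀ x y : ℝ², dirProj θ x - dirProj θ y ≤ dist x y := fun x y =>
    (le_abs_self _).trans <| by rw [← map_sub, dist_eq_norm]; exact abs_dirProj_le θ _
  have hloop := two_mul_dist_le_sum_dist_of_closed (fun k => dirProj θ (q k))
    (congrArg _ hq) hi hj
  simp only [Real.dist_eq, ← map_sub] at hloop
  have hij : dirProj θ (q i) - dirProj θ (q j) ≤ |dirProj θ (q i - q j)| := by
    rw [map_sub]; exact le_abs_self _
  have hi' := hproj xmax (q i)
  have hj' := hproj (q j) xmin
  rw [dist_comm] at hj'
  rw [width, ← hmax, ← hmin]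
  linarith

end Width

lemma integral_sum_abs_dirProj (q : ℕ → ℝ²) (N : ℕ) :
    ∫ θ in (0)..π, ∑ k ∈ Finset.range N, |dirProj θ (q (k + 1) - q k)|
      = 2 * ∑ k ∈ Finset.range N, dist (q (k + 1)) (q k) := by
  rw [intervalIntegral.integral_finsetSum fun k _ =>
    (by simp only [dirProj_apply]; fun_prop :
      Continuous fun θ => |dirProj θ (q (k + 1) - q k)|).intervalIntegrable _ _]
  simp only [integral_abs_dirProj, dist_eq_norm, Finset.mul_sum]

theorem integral_width_le_eVariationOn {γ : ℝ → ℝ²} (hγ : ContinuousOn γ (Icc 0 1))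
    (hclosed : γ 0 = γ 1) (hfin : eVariationOn γ (Icc 0 1) ≠ ⊤) :
    ∫ θ in (0)..π, width (γ '' Icc 0 1) θ ≤ (eVariationOn γ (Icc 0 1)).toReal := by
  have hK : IsCompact (γ '' Icc 0 1) := isCompact_Icc.image_of_continuousOn hγ
  have hKne : (γ '' Icc 0 1).Nonempty := (nonempty_Icc.mpr zero_le_one).image γ
  refine le_of_forall_pos_le_add fun ε hε => ?_
  obtain ⟨N, hN, hnear⟩ := exists_nat_forall_dist_le hγ (ε := ε / (2 * π)) (by positivity)
  set q : ℕ → ℝ² := fun k => γ (k / N)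
  have hq : q N = q 0 := by simp [q, div_self (by positivity : (N : ℝ) ≠ 0), hclosed]
  have hnearK : ∀ x ∈ γ '' Icc 0 1, ∃ k ≤ N, dist x (q k) ≤ ε / (2 * π) := by
    rintro _ ⟨s, hs, rfl⟩; exact hnear s hs
  have hlength : ∑ k ∈ Finset.range N, dist (q (k + 1)) (q k)
      ≤ (eVariationOn γ (Icc 0 1)).toReal := by
    refine sum_dist_le_toReal_eVariationOn hfin (u := fun k : ℕ => (k : ℝ) / N)
      (fun a _ b _ hab => div_le_div_of_nonneg_right (by exact_mod_cast hab) N.cast_nonneg)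
      fun k hk => ⟨by positivity, ?_⟩
    exact div_le_one_of_le₀ (by exact_mod_cast hk.2) N.cast_nonneg
  set S : ℝ → ℝ := fun θ => ∑ k ∈ Finset.range N, |dirProj θ (q (k + 1) - q k)|
  have hS : Continuous S := by simp only [S, dirProj_apply]; fun_prop
  calc ∫ θ in (0)..π, width (γ '' Icc 0 1) θ
      ≤ ∫ θ in (0)..π, (S θ + 4 * (ε / (2 * π))) / 2 :=
        intervalIntegral.integral_mono_on pi_pos.le (hK.continuous_width.intervalIntegrable _ _)
          ((hS.add continuous_const).div_const 2 |>.intervalIntegrable _ _)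
          fun θ _ => by linarith [hK.two_mul_width_le hKne hq hnearK θ]
    _ = ∑ k ∈ Finset.range N, dist (q (k + 1)) (q k) + ε := by
        rw [intervalIntegral.integral_div, intervalIntegral.integral_add (hS.intervalIntegrable _ _)
          intervalIntegrable_const, integral_sum_abs_dirProj, intervalIntegral.integral_const,
          smul_eq_mul]
        field_simp
        ring
    _ ≤ (eVariationOn γ (Icc 0 1)).toReal + ε := by linarith

theorem exists_add_apply_add_pi_div_two_le_integral {W : ℝ → ℝ} (hW : Continuous W) :
    ∃ θ, π / 2 * (W θ + W (θ + π / 2)) ≤ ∫ θ in (0)..π, W θ := by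
  have hG : Continuous fun θ => W θ + W (θ + π / 2) := hW.add (hW.comp (continuous_add_const _))
  obtain ⟨θ, -, hθ⟩ := (isCompact_Icc (a := 0) (b := π / 2)).exists_isMinOn
    (nonempty_Icc.mpr (by positivity)) hG.continuousOn
  refine ⟨θ, ?_⟩
  have hsplit : ∫ θ in (0)..π, W θ = ∫ θ in (0)..π / 2, (W θ + W (θ + π / 2)) := by
    have hW' : IntervalIntegrable (fun θ => W (θ + π / 2)) volume 0 (π / 2) :=
      (hW.comp (continuous_add_const _)).intervalIntegrable _ _
    rw [intervalIntegral.integral_add (hW.intervalIntegrable _ _) hW',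
      intervalIntegral.integral_comp_add_right W, zero_add, add_halves,
      intervalIntegral.integral_add_adjacent_intervals (hW.intervalIntegrable _ _)
        (hW.intervalIntegrable _ _)]
  calc π / 2 * (W θ + W (θ + π / 2)) = ∫ _ in (0)..π / 2, (W θ + W (θ + π / 2)) := by
        simp [mul_add]
    _ ≤ _ := intervalIntegral.integral_mono_on (by positivity) intervalIntegrable_const
        (hG.intervalIntegrable _ _) fun x hx => hθ hx
    _ = _ := hsplit.symm

def rectBoundary (w h : ℝ) : Set ℝ² :=
  {p | (p 0 ∈ Icc 0 w ∧ p 1 ∈ Icc 0 h) ∧ (p 0 = 0 ∨ p 0 = w ∨ p 1 = 0 ∨ p 1 = h)}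

lemma exists_add_mul_mem_rectBoundary {w h A B C D : ℝ} (hBD : B ≠ 0 ∨ D ≠ 0)
    (hA : A ∈ Icc 0 w) (hC : C ∈ Icc 0 h) :
    ∃ t : ℝ, !₂[A + t * B, C + t * D] ∈ rectBoundary w h := by
  -- `φ t ≥ 0` iff the point lies in the box, and `φ t = 0` iff it lies on the boundary
  set φ : ℝ → ℝ := fun t =>
    min (min (A + t * B) (w - (A + t * B))) (min (C + t * D) (h - (C + t * D)))
  have hφ0 : 0 ≤ φ 0 := by simp only [φ, le_min_iff]; simp only [mem_Icc] at hA hC; grind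
  obtain ⟨t₁, ht₁⟩ : ∃ t₁, φ t₁ ≤ 0 := by
    rcases hBD with hB | hD
    · refine ⟨-(A + 1) / B, (min_le_left _ _).trans <| (min_le_left _ _).trans ?_⟩
      field_simp; linarith
    · refine ⟨-(C + 1) / D, (min_le_right _ _).trans <| (min_le_left _ _).trans ?_⟩
      field_simp; linarith
  obtain ⟨t, -, ht⟩ := intermediate_value_uIcc (a := t₁) (b := 0) (f := φ)
    (by fun_prop) (mem_uIcc.mpr (Or.inl ⟨ht₁, hφ0⟩))
  refine ⟨t, ?_⟩
  simp only [rectBoundary, mem_ofPred_eq, Matrix.cons_val_zero, Matrix.cons_val_one, mem_Icc]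
  simp only [φ] at ht
  grind

/-- The point with coordinates `(a + p 0, b + p 1)` in the frame of directions `θ`, `θ + π / 2`. -/
noncomputable def rectFrame (θ a b : ℝ) (p : ℝ²) : ℝ² :=
  !₂[(a + p 0) * cos θ - (b + p 1) * sin θ, (a + p 0) * sin θ + (b + p 1) * cos θ]

lemma isometry_rectFrame (θ a b : ℝ) : Isometry (rectFrame θ a b) := by
  refine Isometry.of_dist_eq fun p q => ?_
  simp only [dist_eq_norm, norm_eq_sqrt_sq_add_sq]
  congr 1
  simp only [rectFrame, PiLp.sub_apply, Matrix.cons_val_zero, Matrix.cons_val_one]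
  linear_combination ((p 0 - q 0) ^ 2 + (p 1 - q 1) ^ 2) * cos_sq_add_sin_sq θ

lemma rectFrame_dirProj_sub (θ a b : ℝ) (y : ℝ²) :
    rectFrame θ a b !₂[dirProj θ y - a, dirProj (θ + π / 2) y - b] = y := by
  rw [dirProj_add_pi_div_two, dirProj_apply]
  ext i
  fin_cases i <;> simp only [rectFrame, Matrix.cons_val_zero, Matrix.cons_val_one,
    Matrix.cons_val_fin_one, Fin.zero_eta, Fin.mk_one, add_sub_cancel]
  · linear_combination y 0 * cos_sq_add_sin_sq θ
  · linear_combination y 1 * cos_sq_add_sin_sq θ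

lemma inter_rectFrame_image_rectBoundary_nonempty {ℓ : AffineSubspace ℝ ℝ²}
    (hℓ : ℓ.direction ≠ ⊥) {x : ℝ²} (hx : x ∈ ℓ) {θ a b w h : ℝ}
    (hxθ : dirProj θ x - a ∈ Icc 0 w) (hxθ' : dirProj (θ + π / 2) x - b ∈ Icc 0 h) :
    ((ℓ : Set ℝ²) ∩ rectFrame θ a b '' rectBoundary w h).Nonempty := by
  obtain ⟨v, hv, hv0⟩ := Submodule.exists_mem_ne_zero_of_ne_bot hℓ
  have hBD : dirProj θ v ≠ 0 ∨ dirProj (θ + π / 2) v ≠ 0 := by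
    by_contra! h
    exact hv0 (eq_zero_of_dirProj_eq_zero h.1 h.2)
  obtain ⟨t, ht⟩ := exists_add_mul_mem_rectBoundary hBD hxθ hxθ'
  refine ⟨t • v + x, AffineSubspace.vadd_mem_of_mem_direction (ℓ.direction.smul_mem t hv) hx,
    _, ht, ?_⟩
  rw [← rectFrame_dirProj_sub θ a b (t • v + x)]
  simp only [map_add, map_smul, smul_eq_mul]
  ring_nf

/-- If every line of a set `𝓛` of lines in `ℝ²` intersects the image of a
closed curve `γ` of finite length `L`, then there is a rectangle `Q` with
`per(Q) ≤ (4/π) · L` whose boundary (the isometric image of the boundary of the box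
`[0,w] × [0,h]`) intersects every line of `𝓛`: the boundary of `Q` is a closed tour of
length at most `(4/π) · L` visiting every line in `𝓛`. -/
theorem stmt_13 (𝓛 : Set (AffineSubspace ℝ (EuclideanSpace ℝ (Fin 2))))
    (hlines : ∀ ℓ ∈ 𝓛, Module.finrank ℝ (AffineSubspace.direction ℓ) = 1)
    (γ : ℝ → EuclideanSpace ℝ (Fin 2)) (L : ℝ)
    (hcont : ContinuousOn γ (Set.Icc 0 1))
    (hclosed : γ 0 = γ 1)
    (hfin : eVariationOn γ (Set.Icc 0 1) ≠ ⊤)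
    (hL : L = (eVariationOn γ (Set.Icc 0 1)).toReal)
    (hvisit : ∀ ℓ ∈ 𝓛, ((ℓ : Set (EuclideanSpace ℝ (Fin 2))) ∩ γ '' Set.Icc 0 1).Nonempty) :
    ∃ (w h : ℝ) (f : EuclideanSpace ℝ (Fin 2) → EuclideanSpace ℝ (Fin 2)),
      0 ≤ w ∧ 0 ≤ h ∧ Isometry f ∧
      2 * (w + h) ≤ (4 / Real.pi) * L ∧
      ∀ ℓ ∈ 𝓛, ((ℓ : Set (EuclideanSpace ℝ (Fin 2))) ∩
        f '' {p : EuclideanSpace ℝ (Fin 2) | (p 0 ∈ Set.Icc 0 w ∧ p 1 ∈ Set.Icc 0 h) ∧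
          (p 0 = 0 ∨ p 0 = w ∨ p 1 = 0 ∨ p 1 = h)}).Nonempty := by
  set K := γ '' Icc 0 1
  have hK : IsCompact K := isCompact_Icc.image_of_continuousOn hcont
  obtain ⟨θ, hθ⟩ := exists_add_apply_add_pi_div_two_le_integral hK.continuous_width
  have hθL := hθ.trans (hL ▸ integral_width_le_eVariationOn hcont hclosed hfin)
  refine ⟨width K θ, width K (θ + π / 2),
    rectFrame θ (sInf (dirProj θ '' K)) (sInf (dirProj (θ + π / 2) '' K)),
    hK.width_nonneg θ, hK.width_nonneg _, isometry_rectFrame _ _ _, ?_, fun ℓ hℓ => ?_⟩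
  · rw [div_mul_eq_mul_div, le_div_iff₀ pi_pos]
    linarith
  · obtain ⟨x, hxℓ, hxK⟩ := hvisit ℓ hℓ
    have hdir : ℓ.direction ≠ ⊥ := fun h =>
      one_ne_zero ((hlines ℓ hℓ).symm.trans (Submodule.finrank_eq_zero.mpr h))
    exact inter_rectFrame_image_rectBoundary_nonempty hdir hxℓ
      (hK.dirProj_sub_sInf_mem_Icc hxK θ) (hK.dirProj_sub_sInf_mem_Icc hxK _)
end
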